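/- arXiv:1704.02816 — 10 statements merged into one kernel-verified Lean document; each statement's English description precedes it below -/
import Mathlib

section
/- If f : (a,b) → ℝ is convex and differentiable on (a,b), then for every x ∈ (a,b), the pointwise Hölder exponent of f' at x is at most h_f(x) - 1, i.e. h_{f'}(x) ≤ h_f(x) - 1, whenever h_f(x) ≥ 1. -/
open Filter Set
open scoped ENNReal NNReal

/-!
If `f' y = P (y - x) + O(|y - x| ^ h)` near `x`, then the mean value inequality applied to
`f` minus an antiderivative `Q` of `P (· - x)` on the segment `[x, y]` gives
`f y = f x + Q (y - x) + O(|y - x| ^ (h + 1))`, and `deg Q ≤ deg P + 1 < h + 1`.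
So every exponent admissible for `f'` at `x`, increased by one, is admissible for `f`.
-/

/-- The pointwise Hölder exponent of `f` at `x`, computed within the set `s`:
the supremum of all `h ≥ 0` such that there exist a polynomial `P` of degree
strictly less than `h` and a constant `C > 0` with
`|f y - P (y - x)| ≤ C * |y - x| ^ h` for `y` near `x` (within `s`). -/
noncomputable def holderExpOn (f : ℝ → ℝ) (s : Set ℝ) (x : ℝ) : ℝ≥0∞ :=
  ⨆ (h : ℝ≥0) (_ : ∃ P : Polynomial ℝ, (P.natDegree : ℝ) < (h : ℝ) ∧
      ∃ C > (0:ℝ), ∀ᶠ y in nhdsWithin x s, |f y - P.eval (y - x)| ≤ C * |y - x| ^ (h : ℝ)),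
    (h : ℝ≥0∞)

open Topology

namespace Polynomial

variable {K : Type*} [Field K]

noncomputable def antideriv (P : K[X]) : K[X] :=
  ∑ n ∈ P.support, C (P.coeff n / (n + 1)) * X ^ (n + 1)

theorem derivative_antideriv [CharZero K] (P : K[X]) : derivative (antideriv P) = P := by
  rw [antideriv, map_sum]
  conv_rhs => rw [P.as_sum_support]
  refine Finset.sum_congr rfl fun n _ => ?_
  rw [derivative_C_mul_X_pow, Nat.add_sub_cancel, Nat.cast_add_one,
    div_mul_cancel₀ _ (Nat.cast_add_one_ne_zero n), C_mul_X_pow_eq_monomial]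

@[simp]
theorem eval_zero_antideriv (P : K[X]) : (antideriv P).eval 0 = 0 := by
  simp [antideriv, eval_finsetSum]

theorem natDegree_antideriv_le (P : K[X]) : (antideriv P).natDegree ≤ P.natDegree + 1 :=
  natDegree_sum_le_of_forall_le _ _ fun n hn =>
    (natDegree_C_mul_X_pow_le _ _).trans (Nat.succ_le_succ (le_natDegree_of_mem_supp n hn))

end Polynomial

open Polynomial

theorem abs_sub_sub_eval_antideriv_le {g : ℝ → ℝ} {P : ℝ[X]} {x y C h : ℝ}
    (hC : 0 ≤ C) (hh : 0 ≤ h) (hdiff : ∀ t ∈ uIcc x y, DifferentiableAt ℝ g t)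
    (hbound : ∀ t ∈ uIcc x y, |deriv g t - P.eval (t - x)| ≤ C * |t - x| ^ h) :
    |g y - g x - (antideriv P).eval (y - x)| ≤ C * |y - x| ^ (h + 1) := by
  rcases eq_or_ne y x with rfl | hyx
  · simp only [sub_self, eval_zero_antideriv, abs_zero]
    positivity
  set φ := fun t => g t - (antideriv P).eval (t - x)
  have hφ : ∀ t ∈ uIcc x y, HasDerivWithinAt φ (deriv g t - P.eval (t - x)) (uIcc x y) t := by
    intro t ht
    have hQ : HasDerivAt (fun t => (antideriv P).eval (t - x)) (P.eval (t - x)) t := by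
      simpa only [derivative_antideriv] using ((antideriv P).hasDerivAt (t - x)).comp_sub_const t x
    exact ((hdiff t ht).hasDerivAt.sub hQ).hasDerivWithinAt
  have hφ' : ∀ t ∈ uIcc x y, ‖deriv g t - P.eval (t - x)‖ ≤ C * |y - x| ^ h := fun t ht =>
    (hbound t ht).trans <| mul_le_mul_of_nonneg_left
      (Real.rpow_le_rpow (abs_nonneg _) (abs_sub_left_of_mem_uIcc ht) hh) hC
  have hmvt := convex_uIcc x y |>.norm_image_sub_le_of_norm_hasDerivWithin_le hφ hφ'
    left_mem_uIcc right_mem_uIcc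
  simpa [φ, Real.rpow_add_one (abs_ne_zero.2 (sub_ne_zero.2 hyx)), mul_assoc, sub_right_comm]
    using hmvt

theorem eventually_abs_sub_sub_eval_antideriv_le {g : ℝ → ℝ} {P : ℝ[X]} {x C h : ℝ}
    (hC : 0 ≤ C) (hh : 0 ≤ h) (hdiff : ∀ᶠ t in 𝓝 x, DifferentiableAt ℝ g t)
    (hbound : ∀ᶠ t in 𝓝 x, |deriv g t - P.eval (t - x)| ≤ C * |t - x| ^ h) :
    ∀ᶠ y in 𝓝 x, |g y - g x - (antideriv P).eval (y - x)| ≤ C * |y - x| ^ (h + 1) := by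
  obtain ⟨ε, hε, hball⟩ := Metric.eventually_nhds_iff_ball.1 (hdiff.and hbound)
  filter_upwards [Metric.ball_mem_nhds x hε] with y hy
  have hseg : uIcc x y ⊆ Metric.ball x ε := by
    rw [← segment_eq_uIcc]
    exact (convex_ball x ε).segment_subset (Metric.mem_ball_self hε) hy
  exact abs_sub_sub_eval_antideriv_le hC hh (fun t ht => (hball t (hseg ht)).1)
    fun t ht => (hball t (hseg ht)).2

theorem coe_le_holderExpOn {f : ℝ → ℝ} {s : Set ℝ} {x : ℝ} {h : ℝ≥0} (P : ℝ[X])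
    (hP : (P.natDegree : ℝ) < h) {C : ℝ} (hC : 0 < C)
    (hbound : ∀ᶠ y in 𝓝[s] x, |f y - P.eval (y - x)| ≤ C * |y - x| ^ (h : ℝ)) :
    (h : ℝ≥0∞) ≤ holderExpOn f s x :=
  le_iSup₂ (f := fun (h : ℝ≥0) (_ : ∃ P : ℝ[X], (P.natDegree : ℝ) < h ∧ ∃ C > (0 : ℝ),
    ∀ᶠ y in 𝓝[s] x, |f y - P.eval (y - x)| ≤ C * |y - x| ^ (h : ℝ)) => (h : ℝ≥0∞))
    h ⟨P, hP, C, hC, hbound⟩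

theorem holderExpOn_deriv_le_sub_one {f : ℝ → ℝ} {s : Set ℝ} {x : ℝ} (hs : s ∈ 𝓝 x)
    (hdiff : ∀ y ∈ s, DifferentiableAt ℝ f y) :
    holderExpOn (deriv f) s x ≤ holderExpOn f s x - 1 := by
  refine iSup₂_le fun h ⟨P, hP, C, hC, hbound⟩ =>
    ENNReal.le_sub_of_add_le_right ENNReal.one_ne_top ?_
  rw [nhdsWithin_eq_nhds.2 hs] at hbound
  have hQ : ((Polynomial.C (f x) + antideriv P).natDegree : ℝ) < (h + 1 : ℝ≥0) := by
    rw [natDegree_C_add, NNReal.coe_add, NNReal.coe_one]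
    exact (Nat.cast_le.2 (natDegree_antideriv_le P)).trans_lt (by push_cast; linarith)
  refine coe_le_holderExpOn (Polynomial.C (f x) + antideriv P) hQ hC ?_
  rw [nhdsWithin_eq_nhds.2 hs]
  filter_upwards [eventually_abs_sub_sub_eval_antideriv_le hC.le h.coe_nonneg
    (eventually_of_mem hs hdiff) hbound] with y hy
  simpa [sub_sub] using hy

theorem deriv_holderExp_le_of_convex_general
    (a b x : ℝ) (f : ℝ → ℝ)
    (hdiff : ∀ y ∈ Set.Ioo a b, DifferentiableAt ℝ f y)
    (hx : x ∈ Set.Ioo a b) :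
    holderExpOn (deriv f) (Set.Ioo a b) x ≤ holderExpOn f (Set.Ioo a b) x - 1 :=
  holderExpOn_deriv_le_sub_one (isOpen_Ioo.mem_nhds hx) hdiff

theorem deriv_holderExp_le_of_convex
    (a b x : ℝ) (f : ℝ → ℝ)
    (hconv : ConvexOn ℝ (Set.Ioo a b) f)
    (hdiff : ∀ y ∈ Set.Ioo a b, DifferentiableAt ℝ f y)
    (hx : x ∈ Set.Ioo a b)
    (hh : 1 ≤ holderExpOn f (Set.Ioo a b) x) :
    holderExpOn (deriv f) (Set.Ioo a b) x ≤ holderExpOn f (Set.Ioo a b) x - 1 :=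
  deriv_holderExp_le_of_convex_general a b x f hdiff hx
end

section
/- If f is convex and differentiable on an open interval (a,b) ⊂ ℝ and its pointwise Hölder exponent at some x ∈ (a,b) satisfies h_f(x) ∈ [1,2), then h_f(x) = h_{f'}(x) + 1. -/
/-!
Going up needs only differentiability: if `f' - P(· - x) = O(|· - x|^h)`, the mean value theorem
applied to `f` minus an antiderivative of `P` puts `f` in `C^{h+1}(x)`.

Going down, for `1 < h ≤ 2`, the Hölder polynomial of `f` is its tangent line
`f x + f' x * (y - x)`, and convexity traps `f' y` between the slopes of `f` over `[x, y]` and over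
`[y, 2y - x]`; both slopes differ from `f' x` by `O(|y - x|^{h-1})`. As `h_f(x) < 2`, every
admissible exponent of `f` above `1` lies in this range, while exponents `≤ 1` are trivially
below `h_{f'}(x) + 1`.
-/

open Filter Set
open scoped ENNReal NNReal

open Polynomial Topology

namespace Polynomial

theorem exists_derivative_eq {K : Type*} [Field K] [CharZero K] (P : K[X]) :
    ∃ Q : K[X], derivative Q = P ∧ Q.eval 0 = 0 ∧ Q.natDegree ≤ P.natDegree + 1 := by
  refine ⟨∑ n ∈ Finset.range (P.natDegree + 1), C (P.coeff n / (n + 1)) * X ^ (n + 1),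
    ?_, by simp [eval_finsetSum], ?_⟩
  · conv_rhs => rw [P.as_sum_range_C_mul_X_pow]
    refine (derivative_sum ..).trans (Finset.sum_congr rfl fun n _ => ?_)
    rw [derivative_C_mul_X_pow, Nat.add_sub_cancel]
    congr 2
    field_simp
    push_cast
    ring
  · refine natDegree_sum_le_of_forall_le _ _ fun n hn => ?_
    exact (natDegree_C_mul_X_pow_le _ _).trans (by simpa using Finset.mem_range_succ_iff.mp hn)

end Polynomial

theorem isLittleO_abs_sub_rpow {x h : ℝ} (hh : 1 < h) :
    (fun y => |y - x| ^ h) =o[𝓝 x] fun y => y - x := by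
  have hlim : Tendsto (fun y => |y - x| ^ (h - 1)) (𝓝 x) (𝓝 0) := by
    have : ContinuousAt (fun y => |y - x| ^ (h - 1)) x :=
      (continuous_abs.comp (continuous_sub_right x)).continuousAt.rpow_const
        (Or.inr (by linarith))
    simpa [Real.zero_rpow (by linarith : h - 1 ≠ 0)] using this.tendsto
  refine (((Asymptotics.isLittleO_one_iff ℝ).2 hlim).mul_isBigO
    (Asymptotics.isBigO_abs_left.2 (Asymptotics.isBigO_refl _ _))).congr (fun y => ?_)
    (fun y => one_mul _)
  rw [← Real.rpow_add_one' (abs_nonneg _) (by linarith), sub_add_cancel]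

theorem eventually_abs_sub_le_rpow_add_one {g : ℝ → ℝ} {x C h : ℝ} (hC : 0 ≤ C) (hh : 0 ≤ h)
    (hg : ∀ᶠ t in 𝓝 x, DifferentiableAt ℝ g t ∧ |deriv g t| ≤ C * |t - x| ^ h) :
    ∀ᶠ y in 𝓝 x, |g y - g x| ≤ C * |y - x| ^ (h + 1) := by
  obtain ⟨δ, hδ, hball⟩ := Metric.eventually_nhds_iff_ball.1 hg
  filter_upwards [Metric.ball_mem_nhds x hδ] with y hy
  have hsub : Metric.closedBall x (dist y x) ⊆ Metric.ball x δ := Metric.closedBall_subset_ball hy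
  have hmvt : |g y - g x| ≤ C * |y - x| ^ h * |y - x| :=
    Convex.norm_image_sub_le_of_norm_hasDerivWithin_le
      (fun t ht => (hball t (hsub ht)).1.hasDerivAt.hasDerivWithinAt)
      (fun t ht => (hball t (hsub ht)).2.trans
        (mul_le_mul_of_nonneg_left (Real.rpow_le_rpow (abs_nonneg _) ht hh) hC))
      (convex_closedBall x _) (Metric.mem_closedBall_self dist_nonneg)
      (Metric.mem_closedBall.2 le_rfl)
  rwa [Real.rpow_add_one' (abs_nonneg _) (by linarith), ← mul_assoc]

theorem ConvexOn.deriv_mem_uIcc_slope {s : Set ℝ} {f : ℝ → ℝ} {x y : ℝ} (hf : ConvexOn ℝ s f)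
    (hx : x ∈ s) (hy : y ∈ s) (hx' : 2 * y - x ∈ s) (hd : DifferentiableAt ℝ f y)
    (hxy : y ≠ x) : deriv f y ∈ uIcc (slope f x y) (slope f y (2 * y - x)) := by
  rw [mem_uIcc]
  rcases hxy.lt_or_gt with hlt | hgt
  · right
    rw [slope_comm f x, slope_comm f y]
    exact ⟨hf.slope_le_deriv hx' hy (by linarith) hd, hf.deriv_le_slope hy hx hlt hd⟩
  · left
    exact ⟨hf.slope_le_deriv hx hy hgt hd, hf.deriv_le_slope hy hx' (by linarith) hd⟩

theorem abs_slope_sub_le {f : ℝ → ℝ} {x y d K : ℝ}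
    (hK : |f y - f x - d * (y - x)| ≤ K * |y - x|) (hxy : y ≠ x) : |slope f x y - d| ≤ K := by
  have hpos : 0 < |y - x| := abs_pos.2 (sub_ne_zero.2 hxy)
  have : slope f x y - d = (f y - f x - d * (y - x)) / (y - x) := by
    rw [slope_def_field]
    field_simp [sub_ne_zero.2 hxy]
  rwa [this, abs_div, div_le_iff₀ hpos]

theorem ConvexOn.abs_deriv_sub_le {s : Set ℝ} {f : ℝ → ℝ} {x y d A B : ℝ}
    (hf : ConvexOn ℝ s f) (hx : x ∈ s) (hy : y ∈ s) (hx' : 2 * y - x ∈ s)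
    (hd : DifferentiableAt ℝ f y) (hxy : y ≠ x)
    (hA : |f y - f x - d * (y - x)| ≤ A * |y - x|)
    (hB : |f (2 * y - x) - f x - d * (2 * y - x - x)| ≤ B * |y - x|) (hB0 : 0 ≤ B) :
    |deriv f y - d| ≤ A + B := by
  have hleft : |slope f x y - d| ≤ A + B :=
    abs_slope_sub_le (hA.trans (by nlinarith [abs_nonneg (y - x)])) hxy
  have hright : |slope f y (2 * y - x) - d| ≤ A + B := by
    refine abs_slope_sub_le ?_ (by contrapose! hxy; linarith)
    calc |f (2 * y - x) - f y - d * (2 * y - x - y)|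
        = |(f (2 * y - x) - f x - d * (2 * y - x - x)) - (f y - f x - d * (y - x))| := by
          ring_nf
      _ ≤ B * |y - x| + A * |y - x| := (abs_sub _ _).trans (add_le_add hB hA)
      _ = (A + B) * |2 * y - x - y| := by
          rw [show 2 * y - x - y = y - x by ring]
          ring
  exact (convex_iff_ordConnected.1 (convex_closedBall _ _)).uIcc_subset hleft hright
    (hf.deriv_mem_uIcc_slope hx hy hx' hd hxy)

/-- `f ∈ C^h(x)` within `s`; `holderExpOn f s x` is the supremum of these `h`. -/
def PointwiseHolderWithin (f : ℝ → ℝ) (s : Set ℝ) (x : ℝ) (h : ℝ≥0) : Prop :=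
  ∃ P : ℝ[X], (P.natDegree : ℝ) < (h : ℝ) ∧
    ∃ C > (0:ℝ), ∀ᶠ y in 𝓝[s] x, |f y - P.eval (y - x)| ≤ C * |y - x| ^ (h : ℝ)

section holderExpOn

variable {f : ℝ → ℝ} {s : Set ℝ} {x : ℝ}

theorem le_holderExpOn {h : ℝ≥0} (H : PointwiseHolderWithin f s x h) :
    (h : ℝ≥0∞) ≤ holderExpOn f s x :=
  le_iSup₂ (f := fun (h : ℝ≥0) (_ : PointwiseHolderWithin f s x h) => (h : ℝ≥0∞)) h H

theorem holderExpOn_le_iff {c : ℝ≥0∞} :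
    holderExpOn f s x ≤ c ↔ ∀ h : ℝ≥0, PointwiseHolderWithin f s x h → (h : ℝ≥0∞) ≤ c :=
  iSup₂_le_iff

end holderExpOn

namespace PointwiseHolderWithin

variable {f : ℝ → ℝ} {s : Set ℝ} {x : ℝ}

theorem of_deriv (hs : s ∈ 𝓝 x) (hf : ∀ᶠ y in 𝓝 x, DifferentiableAt ℝ f y) {h : ℝ≥0}
    (H : PointwiseHolderWithin (deriv f) s x h) : PointwiseHolderWithin f s x (h + 1) := by
  obtain ⟨P, hPdeg, C, hC, hP⟩ := H
  rw [nhdsWithin_eq_nhds.2 hs] at hP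
  obtain ⟨Q, hQP, hQ0, hQdeg⟩ := P.exists_derivative_eq
  set R := Polynomial.C (f x) + Q
  refine ⟨R, ?_, C, hC, ?_⟩
  · have : (Q.natDegree : ℝ) ≤ P.natDegree + 1 := by exact_mod_cast hQdeg
    simp only [R, natDegree_C_add, NNReal.coe_add, NNReal.coe_one]
    linarith
  · rw [nhdsWithin_eq_nhds.2 hs]
    have hderiv : ∀ᶠ t in 𝓝 x, DifferentiableAt ℝ (fun t => f t - R.eval (t - x)) t ∧
        |deriv (fun t => f t - R.eval (t - x)) t| ≤ C * |t - x| ^ (h : ℝ) := by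
      filter_upwards [hf, hP] with t hft hPt
      have hRt : HasDerivAt (fun t => f t - R.eval (t - x)) (deriv f t - P.eval (t - x)) t := by
        refine hft.hasDerivAt.sub ?_
        simpa [R, hQP, Function.comp_def] using
          (R.hasDerivAt (t - x)).comp t ((hasDerivAt_id t).sub_const x)
      exact ⟨hRt.differentiableAt, hRt.deriv ▸ hPt⟩
    filter_upwards [eventually_abs_sub_le_rpow_add_one hC.le h.coe_nonneg hderiv] with y hy
    simpa [R, hQ0] using hy

theorem exists_abs_sub_deriv_mul_le (hs : s ∈ 𝓝 x) {h : ℝ≥0} (h1 : 1 < (h : ℝ))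
    (h2 : (h : ℝ) ≤ 2) (H : PointwiseHolderWithin f s x h) :
    ∃ C > 0, ∀ᶠ y in 𝓝 x, |f y - f x - deriv f x * (y - x)| ≤ C * |y - x| ^ (h : ℝ) := by
  obtain ⟨P, hPdeg, C, hC, hP⟩ := H
  rw [nhdsWithin_eq_nhds.2 hs] at hP
  have hPlin : P = Polynomial.C (P.coeff 1) * X + Polynomial.C (P.coeff 0) :=
    eq_X_add_C_of_natDegree_le_one (Nat.lt_succ_iff.1 (by exact_mod_cast hPdeg.trans_le h2))
  have hP0 : P.coeff 0 = f x := by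
    have := hP.self_of_nhds
    rw [hPlin, sub_self, abs_zero, Real.zero_rpow (by positivity), mul_zero] at this
    simp only [eval_add, eval_mul, eval_C, eval_X, mul_zero, zero_add] at this
    linarith [abs_nonpos_iff.1 this]
  have hbound : ∀ᶠ y in 𝓝 x, |f y - f x - P.coeff 1 * (y - x)| ≤ C * |y - x| ^ (h : ℝ) := by
    filter_upwards [hP] with y hy
    rw [hPlin, hP0] at hy
    simpa [sub_sub, add_comm] using hy
  have hderiv : HasDerivAt f (P.coeff 1) x := by
    rw [hasDerivAt_iff_isLittleO]
    refine Asymptotics.IsBigO.trans_isLittleO ?_ (isLittleO_abs_sub_rpow h1)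
    refine Asymptotics.IsBigO.of_bound C ?_
    filter_upwards [hbound] with y hy
    simpa [mul_comm, abs_of_nonneg (Real.rpow_nonneg (abs_nonneg (y - x)) _)] using hy
  exact ⟨C, hC, hderiv.deriv ▸ hbound⟩

theorem deriv_of_convexOn (hs : s ∈ 𝓝 x) (hconv : ConvexOn ℝ s f)
    (hf : ∀ᶠ y in 𝓝 x, DifferentiableAt ℝ f y) {h : ℝ≥0} (h1 : 1 < (h : ℝ)) (h2 : (h : ℝ) ≤ 2)
    (H : PointwiseHolderWithin f s x h) : PointwiseHolderWithin (deriv f) s x (h - 1) := by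
  obtain ⟨C, hC, hB⟩ := H.exists_abs_sub_deriv_mul_le hs h1 h2
  have hcoe : ((h - 1 : ℝ≥0) : ℝ) = h - 1 := by
    rw [NNReal.coe_sub (by exact_mod_cast h1.le), NNReal.coe_one]
  have hrefl : Tendsto (fun y => 2 * y - x) (𝓝 x) (𝓝 x) := by
    have hc : Continuous fun y : ℝ => 2 * y - x := by fun_prop
    convert hc.tendsto x using 2
    ring
  set K := C * (2 ^ (h : ℝ) + 1)
  refine ⟨Polynomial.C (deriv f x), by rw [natDegree_C, Nat.cast_zero, hcoe]; linarith, K, by positivity, ?_⟩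
  rw [nhdsWithin_eq_nhds.2 hs]
  filter_upwards [hB, hrefl.eventually hB, hs, hrefl.eventually hs, hf]
    with y hBy hBy' hy hy' hdy
  rw [eval_C, hcoe]
  rcases eq_or_ne y x with rfl | hxy
  · simp only [sub_self, abs_zero]
    positivity
  set E := |y - x| ^ ((h : ℝ) - 1)
  have hE : |y - x| ^ (h : ℝ) = E * |y - x| := by
    rw [← Real.rpow_add_one' (abs_nonneg _) (by linarith), sub_add_cancel]
  have h2E : |2 * y - x - x| ^ (h : ℝ) = 2 ^ (h : ℝ) * E * |y - x| := by
    rw [show 2 * y - x - x = 2 * (y - x) by ring, abs_mul, abs_two,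
      Real.mul_rpow zero_le_two (abs_nonneg _), hE, mul_assoc]
  have hKE : K * E = C * E + C * 2 ^ (h : ℝ) * E := by ring
  rw [hKE]
  refine hconv.abs_deriv_sub_le (mem_of_mem_nhds hs) hy hy' hdy hxy ?_ ?_ (by positivity)
  · rwa [hE, ← mul_assoc] at hBy
  · rwa [h2E, ← mul_assoc, ← mul_assoc] at hBy'

end PointwiseHolderWithin

theorem holderExp_eq_deriv_add_one_of_convex
    (a b x : ℝ) (f : ℝ → ℝ)
    (hconv : ConvexOn ℝ (Set.Ioo a b) f)
    (hdiff : ∀ y ∈ Set.Ioo a b, DifferentiableAt ℝ f y)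
    (hx : x ∈ Set.Ioo a b)
    (h1 : 1 ≤ holderExpOn f (Set.Ioo a b) x)
    (h2 : holderExpOn f (Set.Ioo a b) x < 2) :
    holderExpOn f (Set.Ioo a b) x = holderExpOn (deriv f) (Set.Ioo a b) x + 1 := by
  have hs : Ioo a b ∈ 𝓝 x := isOpen_Ioo.mem_nhds hx
  have hf : ∀ᶠ y in 𝓝 x, DifferentiableAt ℝ f y := Filter.mem_of_superset hs hdiff
  apply le_antisymm
  · refine holderExpOn_le_iff.2 fun h H => ?_
    rcases le_or_gt (h : ℝ) 1 with hle | hgt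
    · exact (show (h : ℝ≥0∞) ≤ 1 by exact_mod_cast hle).trans le_add_self
    · have hlt : (h : ℝ) < 2 := by exact_mod_cast (le_holderExpOn H).trans_lt h2
      refine tsub_le_iff_right.1 ?_
      simpa [ENNReal.coe_sub] using le_holderExpOn (H.deriv_of_convexOn hs hconv hf hgt hlt.le)
  · refine (ENNReal.le_sub_iff_add_le_right ENNReal.one_ne_top h1).1 <|
      holderExpOn_le_iff.2 fun h H => (ENNReal.le_sub_iff_add_le_right ENNReal.one_ne_top h1).2 ?_
    exact_mod_cast le_holderExpOn (H.of_deriv hs hf)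
end

section
/- Let f be convex and differentiable on (a,b) with h_f(x) ∈ [1,2) at some x ∈ (a,b), and set h = h_{f'}(x) < 1. Then for every n there exists x_n with x_n → x such that |f'(x_n) − f'(x)| > |x_n − x|^{h + 1/n}; moreover if x_n > x and x_n' = x + 2(x_n − x), then f(x_n') ≥ f(x) + f'(x)(x_n' − x) + 2^{−(h+1+1/n)}(x_n' − x)^{h+1+1/n}. -/
open Filter Set
open scoped ENNReal NNReal

/-! If `|f' y - f' x| ≤ |y - x| ^ (h + 1/n)` held for all `y` near `x`, the constant
polynomial `f' x` would witness `h_{f'}(x) ≥ h + 1/n`; so points violating this bound accumulate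
at `x`. At such a point `x < y`, the tangent lines of the convex `f` at `x` and at `y` give
`f (2y - x) ≥ f x + f' x (2y - 2x) + (f' y - f' x)(y - x)`, and the last term exceeds
`(y - x) ^ (h + 1 + 1/n)`. -/

open Topology

lemma le_holderExpOn_s2 {g : ℝ → ℝ} {s : Set ℝ} {x : ℝ} {e : ℝ≥0} {P : Polynomial ℝ}
    (hP : (P.natDegree : ℝ) < e) {C : ℝ} (hC : 0 < C)
    (hbound : ∀ᶠ y in 𝓝[s] x, |g y - P.eval (y - x)| ≤ C * |y - x| ^ (e : ℝ)) :
    (e : ℝ≥0∞) ≤ holderExpOn g s x :=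
  le_iSup₂ (f := fun (h : ℝ≥0) (_ : _) => (h : ℝ≥0∞)) e ⟨P, hP, C, hC, hbound⟩

lemma frequently_rpow_lt_abs_sub_of_holderExpOn_lt {g : ℝ → ℝ} {s : Set ℝ} {x e : ℝ}
    (he : holderExpOn g s x < ENNReal.ofReal e) :
    ∃ᶠ y in 𝓝[s] x, |y - x| ^ e < |g y - g x| := by
  have he_pos : 0 < e := ENNReal.ofReal_pos.1 (pos_of_gt he)
  by_contra hbound
  rw [not_frequently] at hbound
  refine he.not_ge (le_holderExpOn_s2 (e := e.toNNReal) (P := Polynomial.C (g x)) ?_ one_pos ?_)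
  · simpa using he_pos
  · filter_upwards [hbound] with y hy
    simpa [he_pos.le] using hy

lemma Filter.exists_seq_tendsto_forall_of_frequently {α : Type*} {l : Filter α}
    [l.IsCountablyGenerated] {P : ℕ → α → Prop} (hP : ∀ n, ∃ᶠ y in l, P n y) :
    ∃ u : ℕ → α, Tendsto u atTop l ∧ ∀ n, P n (u n) := by
  obtain ⟨t, ht⟩ := l.exists_antitone_basis
  have hpick : ∀ n, ∃ y, y ∈ t n ∧ P n y := fun n =>
    ((hP n).and_eventually (ht.mem n)).exists.imp fun _ hy => ⟨hy.2, hy.1⟩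
  choose u hut huP using hpick
  exact ⟨u, ht.tendsto hut, huP⟩

lemma ConvexOn.add_deriv_mul_sub_le {S : Set ℝ} {f : ℝ → ℝ} (hf : ConvexOn ℝ S f) {y z : ℝ}
    (hy : y ∈ S) (hz : z ∈ S) (hyz : y < z) (hd : DifferentiableAt ℝ f y) :
    f y + deriv f y * (z - y) ≤ f z := by
  have hslope := hf.deriv_le_slope hy hz hyz hd
  rw [slope_def_field, le_div_iff₀ (sub_pos.2 hyz)] at hslope
  linarith

lemma ConvexOn.add_deriv_mul_add_abs_sub_deriv_mul_le {S : Set ℝ} {f : ℝ → ℝ}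
    (hf : ConvexOn ℝ S f) (hd : ∀ y ∈ S, DifferentiableAt ℝ f y) {x y : ℝ} (hx : x ∈ S)
    (hy : y ∈ S) (hy' : x + 2 * (y - x) ∈ S) (hxy : x < y) :
    f x + deriv f x * (2 * (y - x)) + |deriv f y - deriv f x| * (y - x) ≤ f (x + 2 * (y - x)) := by
  have hmono : deriv f x ≤ deriv f y := hf.monotoneOn_deriv hd hx hy hxy.le
  have htan_x := hf.add_deriv_mul_sub_le hx hy hxy (hd x hx)
  have htan_y := hf.add_deriv_mul_sub_le hy hy' (by linarith) (hd y hy)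
  rw [abs_of_nonneg (sub_nonneg.2 hmono)]
  linarith

lemma Real.rpow_neg_mul_mul_rpow {c t : ℝ} (hc : 0 < c) (ht : 0 ≤ t) (p : ℝ) :
    c ^ (-p) * (c * t) ^ p = t ^ p := by
  rw [Real.mul_rpow hc.le ht, ← mul_assoc, Real.rpow_neg hc.le, inv_mul_cancel₀ (by positivity),
    one_mul]

theorem exists_sequence_of_deriv_holderExp_lt_one_general
    (a b x h : ℝ) (f : ℝ → ℝ)
    (hconv : ConvexOn ℝ (Set.Ioo a b) f)
    (hdiff : ∀ y ∈ Set.Ioo a b, DifferentiableAt ℝ f y)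
    (hx : x ∈ Set.Ioo a b)
    (hh0 : 0 ≤ h)
    (hder : holderExpOn (deriv f) (Set.Ioo a b) x = ENNReal.ofReal h) :
    ∃ xs : ℕ → ℝ, (∀ n, xs n ∈ Set.Ioo a b) ∧
      Filter.Tendsto xs Filter.atTop (nhds x) ∧
      ∀ n : ℕ, 0 < n →
        |deriv f (xs n) - deriv f x| > |xs n - x| ^ (h + 1 / (n : ℝ)) ∧
        (x < xs n →
          f (x + 2 * (xs n - x)) ≥
            f x + deriv f x * (2 * (xs n - x)) +
              (2:ℝ) ^ (-(h + 1 + 1 / (n : ℝ))) * (2 * (xs n - x)) ^ (h + 1 + 1 / (n : ℝ))) := by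
  have hS : Ioo a b ∈ 𝓝 x := Ioo_mem_nhds hx.1 hx.2
  have hreflect : Tendsto (fun y => x + 2 * (y - x)) (𝓝 x) (𝓝 x) :=
    (by fun_prop : Continuous fun y : ℝ => x + 2 * (y - x)).tendsto' x x (by ring)
  have hgood : ∀ᶠ y in 𝓝 x, y ∈ Ioo a b ∧ x + 2 * (y - x) ∈ Ioo a b :=
    (eventually_mem_set.2 hS).and (hreflect.eventually_mem hS)
  have hfreq : ∀ n : ℕ, ∃ᶠ y in 𝓝 x, (y ∈ Ioo a b ∧ x + 2 * (y - x) ∈ Ioo a b) ∧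
      (0 < n → |y - x| ^ (h + 1 / (n : ℝ)) < |deriv f y - deriv f x|) := by
    intro n
    rcases n.eq_zero_or_pos with rfl | hn
    · exact hgood.frequently.mono fun y hy => ⟨hy, by simp⟩
    have hlt : holderExpOn (deriv f) (Ioo a b) x < ENNReal.ofReal (h + 1 / n) := by
      rw [hder, ENNReal.ofReal_lt_ofReal_iff_of_nonneg hh0, lt_add_iff_pos_right]
      positivity
    have hbad := frequently_rpow_lt_abs_sub_of_holderExpOn_lt hlt
    rw [nhdsWithin_eq_nhds.2 hS] at hbad
    exact (hbad.and_eventually hgood).mono fun y hy => ⟨hy.2, fun _ => hy.1⟩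
  obtain ⟨xs, hlim, hxs⟩ := exists_seq_tendsto_forall_of_frequently hfreq
  refine ⟨xs, fun n => (hxs n).1.1, hlim, fun n hn => ⟨(hxs n).2 hn, fun hlt => ?_⟩⟩
  obtain ⟨⟨hy, hy'⟩, hgap⟩ := hxs n
  have hpos : 0 < xs n - x := sub_pos.2 hlt
  rw [abs_of_pos hpos] at hgap
  have hconvex := hconv.add_deriv_mul_add_abs_sub_deriv_mul_le hdiff hx hy hy' hlt
  rw [Real.rpow_neg_mul_mul_rpow two_pos hpos.le, add_right_comm h 1,
    Real.rpow_add_one hpos.ne']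
  linarith [mul_lt_mul_of_pos_right (hgap hn) hpos]

theorem exists_sequence_of_deriv_holderExp_lt_one
    (a b x h : ℝ) (f : ℝ → ℝ)
    (hconv : ConvexOn ℝ (Set.Ioo a b) f)
    (hdiff : ∀ y ∈ Set.Ioo a b, DifferentiableAt ℝ f y)
    (hx : x ∈ Set.Ioo a b)
    (hf1 : 1 ≤ holderExpOn f (Set.Ioo a b) x)
    (hf2 : holderExpOn f (Set.Ioo a b) x < 2)
    (hh0 : 0 ≤ h) (hh1 : h < 1)
    (hder : holderExpOn (deriv f) (Set.Ioo a b) x = ENNReal.ofReal h) :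
    ∃ xs : ℕ → ℝ, (∀ n, xs n ∈ Set.Ioo a b) ∧
      Filter.Tendsto xs Filter.atTop (nhds x) ∧
      ∀ n : ℕ, 0 < n →
        |deriv f (xs n) - deriv f x| > |xs n - x| ^ (h + 1 / (n : ℝ)) ∧
        (x < xs n →
          f (x + 2 * (xs n - x)) ≥
            f x + deriv f x * (2 * (xs n - x)) +
              (2:ℝ) ^ (-(h + 1 + 1 / (n : ℝ))) * (2 * (xs n - x)) ^ (h + 1 + 1 / (n : ℝ))) :=
  exists_sequence_of_deriv_holderExp_lt_one_general a b x h f hconv hdiff hx hh0 hder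
end

section
/- If f is convex on an open interval (a,b) ⊂ ℝ and h_f(x) ∈ [1,2) for some x ∈ (a,b), then min(h_{f'_+}(x), h_{f'_-}(x)) ≤ h_f(x) − 1, where f'_+ and f'_- denote the right and left derivatives of f. -/
open Filter Set
open scoped ENNReal NNReal

/-- The right derivative of `f` at `x`. -/
noncomputable def rightDeriv' (f : ℝ → ℝ) (x : ℝ) : ℝ := derivWithin f (Set.Ioi x) x

/-- The left derivative of `f` at `x`. -/
noncomputable def leftDeriv' (f : ℝ → ℝ) (x : ℝ) : ℝ := derivWithin f (Set.Iio x) x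

/-!
Suppose `|f'₊(y) - f'₊(x)| = O(|y - x| ^ h)` for some `0 < h ≤ 1`. Convexity traps every secant
slope `slope f x y` between `f'₊(x)` and `f'₊(y)`, so
`f(y) = f(x) + f'₊(x) (y - x) + O(|y - x| ^ (1 + h))` and hence `h_f(x) ≥ 1 + h`.
Since `h_f(x) < 2`, any `h` strictly between `h_f(x) - 1` and `min(h_{f'₊}(x), 1)` would give such
a bound, so already `h_{f'₊}(x) ≤ h_f(x) - 1`.
-/

open Asymptotics Topology

section HolderExponent

variable {g : ℝ → ℝ} {s : Set ℝ} {x : ℝ}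

lemma le_holderExpOn_of_isBigO {k : ℝ≥0} {P : Polynomial ℝ} (hdeg : (P.natDegree : ℝ) < k)
    (hP : (fun y ↦ g y - P.eval (y - x)) =O[𝓝[s] x] fun y ↦ |y - x| ^ (k : ℝ)) :
    (k : ℝ≥0∞) ≤ holderExpOn g s x := by
  obtain ⟨C, hC, hCP⟩ := hP.exists_pos
  rw [holderExpOn]
  refine le_iSup₂_of_le k ⟨P, hdeg, C, hC, ?_⟩ le_rfl
  filter_upwards [hCP.bound] with y hy
  simpa [abs_of_nonneg (Real.rpow_nonneg (abs_nonneg (y - x)) _)] using hy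

lemma exists_isBigO_of_lt_holderExpOn {r : ℝ≥0∞} (hr : r < holderExpOn g s x) :
    ∃ k : ℝ≥0, r < k ∧ ∃ P : Polynomial ℝ, (P.natDegree : ℝ) < k ∧
      (fun y ↦ g y - P.eval (y - x)) =O[𝓝[s] x] fun y ↦ |y - x| ^ (k : ℝ) := by
  obtain ⟨k, hk⟩ := lt_iSup_iff.mp hr
  obtain ⟨⟨P, hdeg, C, -, hC⟩, hrk⟩ := lt_iSup_iff.mp hk
  refine ⟨k, hrk, P, hdeg, IsBigO.of_bound C ?_⟩
  filter_upwards [hC] with y hy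
  simpa [abs_of_nonneg (Real.rpow_nonneg (abs_nonneg (y - x)) _)] using hy

lemma isBigO_abs_sub_rpow_of_le {h k : ℝ} (h0 : 0 ≤ h) (hk : h ≤ k) :
    (fun y ↦ |y - x| ^ k) =O[𝓝 x] fun y ↦ |y - x| ^ h := by
  refine IsBigO.of_bound' ?_
  filter_upwards [Metric.closedBall_mem_nhds x one_pos] with y hy
  rw [Metric.mem_closedBall, Real.dist_eq] at hy
  simp only [Real.norm_eq_abs, abs_of_nonneg (Real.rpow_nonneg (abs_nonneg (y - x)) _)]
  exact Real.rpow_le_rpow_of_exponent_ge' (abs_nonneg _) hy h0 hk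

lemma isBigO_sub_rpow_of_isBigO_sub_eval (hxs : x ∈ s) {h k : ℝ} (h0 : 0 < h) (hk : h ≤ k)
    (h1 : h ≤ 1) {P : Polynomial ℝ}
    (hP : (fun y ↦ g y - P.eval (y - x)) =O[𝓝[s] x] fun y ↦ |y - x| ^ k) :
    (fun y ↦ g y - g x) =O[𝓝[s] x] fun y ↦ |y - x| ^ h := by
  have hgx : g x = P.eval 0 := by
    have := hP.eq_zero_imp.self_of_nhdsWithin hxs (by simp [(h0.trans_le hk).ne'])
    simpa [sub_eq_zero] using this
  have hPlin : (fun y ↦ P.eval (y - x) - P.eval 0) =O[𝓝 x] fun y ↦ |y - x| ^ (1 : ℝ) := by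
    simpa using ((P.hasDerivAt (x - x)).comp_sub_const x x).isBigO_sub.norm_right
  have hsplit : (fun y ↦ g y - g x) =
      fun y ↦ (g y - P.eval (y - x)) + (P.eval (y - x) - P.eval 0) := by
    funext y; rw [hgx]; ring
  rw [hsplit]
  exact (hP.trans ((isBigO_abs_sub_rpow_of_le h0.le hk).mono nhdsWithin_le_nhds)).add
    ((hPlin.trans (isBigO_abs_sub_rpow_of_le h0.le h1)).mono nhdsWithin_le_nhds)

lemma isBigO_sub_rpow_of_lt_holderExpOn (hxs : x ∈ s) {h : ℝ≥0} (h0 : 0 < h) (h1 : h ≤ 1)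
    (hh : (h : ℝ≥0∞) < holderExpOn g s x) :
    (fun y ↦ g y - g x) =O[𝓝[s] x] fun y ↦ |y - x| ^ (h : ℝ) := by
  obtain ⟨k, hhk, P, -, hP⟩ := exists_isBigO_of_lt_holderExpOn hh
  exact isBigO_sub_rpow_of_isBigO_sub_eval hxs h0 (by exact_mod_cast hhk.le)
    (by exact_mod_cast h1) hP

end HolderExponent

namespace ConvexOn

variable {S : Set ℝ} {f : ℝ → ℝ} {x y : ℝ}

lemma slope_mem_uIcc_rightDeriv (hf : ConvexOn ℝ S f) (hx : x ∈ interior S)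
    (hy : y ∈ interior S) (hyx : y ≠ x) :
    slope f x y ∈ uIcc (rightDeriv' f x) (rightDeriv' f y) := by
  rcases hyx.lt_or_gt with hyx | hxy
  · rw [slope_comm]
    refine mem_uIcc.mpr (.inr ⟨hf.rightDeriv_le_slope_of_mem_interior hy (interior_subset hx) hyx,
      ?_⟩)
    exact (hf.slope_le_leftDeriv_of_mem_interior (interior_subset hy) hx hyx).trans
      (hf.leftDeriv_le_rightDeriv_of_mem_interior hx)
  · refine mem_uIcc.mpr (.inl ⟨hf.rightDeriv_le_slope_of_mem_interior hx (interior_subset hy) hxy,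
      ?_⟩)
    exact (hf.slope_le_leftDeriv_of_mem_interior (interior_subset hx) hy hxy).trans
      (hf.leftDeriv_le_rightDeriv_of_mem_interior hy)

lemma abs_sub_sub_rightDeriv_mul_le (hf : ConvexOn ℝ S f) (hx : x ∈ interior S)
    (hy : y ∈ interior S) :
    |f y - f x - rightDeriv' f x * (y - x)| ≤ |y - x| * |rightDeriv' f y - rightDeriv' f x| := by
  rcases eq_or_ne y x with rfl | hyx
  · simp
  have hslope :
      f y - f x - rightDeriv' f x * (y - x) = (y - x) * (slope f x y - rightDeriv' f x) := by
    have := sub_smul_slope f x y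
    rw [smul_eq_mul, vsub_eq_sub] at this
    linear_combination -this
  rw [hslope, abs_mul]
  exact mul_le_mul_of_nonneg_left
    (abs_sub_left_of_mem_uIcc (hf.slope_mem_uIcc_rightDeriv hx hy hyx)) (abs_nonneg _)

lemma isBigO_sub_linear_of_isBigO_rightDeriv (hf : ConvexOn ℝ S f) (hx : x ∈ interior S)
    {h : ℝ} (h0 : 0 ≤ h)
    (hd : (fun y ↦ rightDeriv' f y - rightDeriv' f x) =O[𝓝[S] x] fun y ↦ |y - x| ^ h) :
    (fun y ↦ f y - (rightDeriv' f x * (y - x) + f x)) =O[𝓝[S] x] fun y ↦ |y - x| ^ (1 + h) := by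
  have hpow : (fun y ↦ |y - x| ^ (1 + h)) = fun y ↦ |y - x| * |y - x| ^ h := by
    funext y; rw [Real.rpow_add' (abs_nonneg _) (by positivity), Real.rpow_one]
  have hlin : (fun y ↦ y - x) =O[𝓝[S] x] fun y ↦ |y - x| := (isBigO_refl _ _).norm_right
  rw [hpow]
  refine IsBigO.trans (IsBigO.of_bound' ?_) (hlin.mul hd)
  filter_upwards [mem_nhdsWithin_of_mem_nhds (isOpen_interior.mem_nhds hx)] with y hy
  simpa [abs_mul, sub_add_eq_sub_sub, sub_right_comm _ (f x)]
    using hf.abs_sub_sub_rightDeriv_mul_le hx hy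

end ConvexOn

theorem min_oneSided_holderExp_le_of_convex_general
    (a b x : ℝ) (f : ℝ → ℝ)
    (hconv : ConvexOn ℝ (Set.Ioo a b) f)
    (hx : x ∈ Set.Ioo a b)
    (h2 : holderExpOn f (Set.Ioo a b) x < 2) :
    min (holderExpOn (rightDeriv' f) (Set.Ioo a b) x)
        (holderExpOn (leftDeriv' f) (Set.Ioo a b) x)
      ≤ holderExpOn f (Set.Ioo a b) x - 1 := by
  refine min_le_of_left_le (le_of_not_gt fun hlt ↦ ?_)
  set H := holderExpOn f (Ioo a b) x
  have hH1 : H - 1 < 1 := by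
    rcases le_total 1 H with h1H | hH1
    · exact ENNReal.sub_lt_of_lt_add h1H (by rwa [one_add_one_eq_two])
    · simp [tsub_eq_zero_of_le hH1]
  obtain ⟨h, hHh, hh⟩ := ENNReal.lt_iff_exists_nnreal_btwn.mp (lt_min hlt hH1)
  obtain ⟨hhd, hh1⟩ := lt_min_iff.mp hh
  have h0 : 0 < h := ENNReal.coe_pos.mp (zero_le.trans_lt hHh)
  have h1 : h ≤ 1 := ENNReal.coe_le_one_iff.mp hh1.le
  have hd := isBigO_sub_rpow_of_lt_holderExpOn hx h0 h1 hhd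
  have hx' : x ∈ interior (Ioo a b) := by rwa [interior_Ioo]
  have hf := hconv.isBigO_sub_linear_of_isBigO_rightDeriv hx' h.2 hd
  have hle : ((1 + h : ℝ≥0) : ℝ≥0∞) ≤ H := by
    refine le_holderExpOn_of_isBigO (P := .C (rightDeriv' f x) * .X + .C (f x)) ?_
      (by simpa using hf)
    calc ((Polynomial.C (rightDeriv' f x) * .X + .C (f x)).natDegree : ℝ) ≤ 1 := by
          exact_mod_cast Polynomial.natDegree_linear_le
      _ < (1 + h : ℝ≥0) := by push_cast; linarith [NNReal.coe_pos.mpr h0]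
  exact (ENNReal.lt_add_of_sub_lt_left (.inr ENNReal.one_ne_top) hHh).not_ge (by simpa using hle)

theorem min_oneSided_holderExp_le_of_convex
    (a b x : ℝ) (f : ℝ → ℝ)
    (hconv : ConvexOn ℝ (Set.Ioo a b) f)
    (hx : x ∈ Set.Ioo a b)
    (h1 : 1 ≤ holderExpOn f (Set.Ioo a b) x)
    (h2 : holderExpOn f (Set.Ioo a b) x < 2) :
    min (holderExpOn (rightDeriv' f) (Set.Ioo a b) x)
        (holderExpOn (leftDeriv' f) (Set.Ioo a b) x)
      ≤ holderExpOn f (Set.Ioo a b) x - 1 :=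
  min_oneSided_holderExp_le_of_convex_general a b x f hconv hx h2
end

section
/- Let g : [0,1] → ℝ be a monotone function and 0 ≤ h ≤ 1. Then the Hausdorff dimension of the set E_g^≤(h) = {x ∈ [0,1] : h_g(x) ≤ h} is at most h. -/
open Filter Set
open scoped ENNReal NNReal

/-! If `h_g(x) < α` with `α > 0`, the constant polynomial `g x` violates
`|g y - g x| ≤ 2^α |y - x|^α` at points `y` arbitrarily close to `x`. For monotone `g` the
increment `|g y - g x|` is at most the Lebesgue–Stieltjes mass of `B(x, 2|y - x|)`, so this mass
`μ` satisfies `μ(B(x, r)) ≥ r^α` for arbitrarily small `r` at every point of the level set `E`.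
A Vitali covering then gives the mass distribution bound `μH[α] E ≤ 8^α μ(E + [-1, 1]) < ∞` for
every `α > h`, hence `dim E ≤ h`. Antitone `g` is handled through `-g`. -/

open Metric MeasureTheory
open scoped Topology

section ClosedBallCovers

variable {X : Type*} [PseudoMetricSpace X]

lemma ediam_closedBall_le_ofReal (x : X) {r : ℝ} (hr : 0 ≤ r) :
    ediam (closedBall x r) ≤ ENNReal.ofReal (2 * r) := by
  rw [← closedEBall_ofReal hr, ENNReal.ofReal_mul zero_le_two, ENNReal.ofReal_ofNat]
  exact ediam_closedEBall_le

lemma exists_countable_disjoint_closedBall_cover [TopologicalSpace.SeparableSpace X]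
    {p : X → ℝ → Prop} {A : Set X} (hA : ∀ x ∈ A, ∃ᶠ r in 𝓝[>] 0, p x r) {δ : ℝ} (hδ : 0 < δ) :
    ∃ u ⊆ A, ∃ rad : X → ℝ, u.Countable ∧
      u.PairwiseDisjoint (fun b => closedBall b (rad b)) ∧
      (∀ b ∈ u, rad b ∈ Ioc 0 δ ∧ p b (rad b)) ∧
      A ⊆ ⋃ b ∈ u, closedBall b (4 * rad b) := by
  have hrad : ∀ x ∈ A, ∃ r, r ∈ Ioc 0 δ ∧ p x r := fun x hx =>
    ((hA x hx).and_eventually (Ioc_mem_nhdsGT hδ)).exists.imp fun _ h => ⟨h.2, h.1⟩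
  choose! rad hrad using hrad
  obtain ⟨u, huA, hdisj, hcov⟩ :=
    Vitali.exists_disjoint_subfamily_covering_enlargement_closedBall A id rad δ
      (fun x hx => (hrad x hx).1.2) 4 (by norm_num)
  have hcount : u.Countable := hdisj.countable_of_nonempty_interior fun b hb =>
    ⟨b, interior_maximal ball_subset_closedBall isOpen_ball
      (mem_ball_self (hrad b (huA hb)).1.1)⟩
  refine ⟨u, huA, rad, hcount, hdisj, fun b hb => hrad b (huA hb), fun x hx => ?_⟩
  obtain ⟨b, hb, hsub⟩ := hcov x hx
  exact mem_biUnion hb (hsub (mem_closedBall_self (hrad x hx).1.1.le))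

variable [MeasurableSpace X] [OpensMeasurableSpace X]

lemma tsum_ediam_closedBall_rpow_le {μ : Measure X} {α : ℝ} (hα : 0 < α) {u : Set X}
    (hu : u.Countable) {rad : X → ℝ} (hdisj : u.PairwiseDisjoint fun b => closedBall b (rad b))
    (hrad : ∀ b ∈ u, 0 ≤ rad b ∧ ENNReal.ofReal (rad b ^ α) ≤ μ (closedBall b (rad b)))
    {c : ℝ} (hc : 0 ≤ c) :
    ∑' b : u, ediam (closedBall (b : X) (c * rad b)) ^ α
      ≤ ENNReal.ofReal ((2 * c) ^ α) * μ (⋃ b ∈ u, closedBall b (rad b)) := by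
  have hball : ∀ b ∈ u, ediam (closedBall b (c * rad b)) ^ α
      ≤ ENNReal.ofReal ((2 * c) ^ α) * μ (closedBall b (rad b)) := fun b hb => by
    have hr := (hrad b hb).1
    calc ediam (closedBall b (c * rad b)) ^ α
        ≤ ENNReal.ofReal (2 * (c * rad b)) ^ α :=
          ENNReal.rpow_le_rpow (ediam_closedBall_le_ofReal b (by positivity)) hα.le
      _ = ENNReal.ofReal ((2 * c) ^ α) * ENNReal.ofReal (rad b ^ α) := by
          rw [ENNReal.ofReal_rpow_of_nonneg (by positivity) hα.le, ← mul_assoc,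
            Real.mul_rpow (by positivity) hr, ENNReal.ofReal_mul (by positivity)]
      _ ≤ ENNReal.ofReal ((2 * c) ^ α) * μ (closedBall b (rad b)) := by
          gcongr; exact (hrad b hb).2
  calc ∑' b : u, ediam (closedBall (b : X) (c * rad b)) ^ α
      ≤ ∑' b : u, ENNReal.ofReal ((2 * c) ^ α) * μ (closedBall (b : X) (rad b)) :=
        ENNReal.tsum_le_tsum fun b => hball b b.2
    _ = ENNReal.ofReal ((2 * c) ^ α) * μ (⋃ b ∈ u, closedBall b (rad b)) := by
        rw [ENNReal.tsum_mul_left, measure_biUnion hu hdisj fun _ _ => measurableSet_closedBall]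

end ClosedBallCovers

section MassDistributionPrinciple

variable {X : Type*} [MetricSpace X] [TopologicalSpace.SeparableSpace X] [MeasurableSpace X]
  [BorelSpace X]

theorem hausdorffMeasure_le_of_frequently_rpow_le_measure_closedBall {μ : Measure X} {α : ℝ}
    (hα : 0 < α) {A : Set X}
    (hA : ∀ x ∈ A, ∃ᶠ r in 𝓝[>] 0, ENNReal.ofReal (r ^ α) ≤ μ (closedBall x r))
    {δ : ℝ} (hδ : 0 < δ) :
    μH[α] A ≤ ENNReal.ofReal (8 ^ α) * μ (cthickening δ A) := by
  have hcover (n : ℕ) := exists_countable_disjoint_closedBall_cover hA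
    (div_pos hδ n.cast_add_one_pos)
  choose u huA rad hu hdisj hrad hcov using hcover
  have (n : ℕ) : Countable (u n) := (hu n).to_subtype
  have hdiam (n : ℕ) (b : u n) :
      ediam (closedBall (b : X) (4 * rad n b)) ≤ ENNReal.ofReal (8 * (δ / (n + 1))) := by
    obtain ⟨⟨hr0, hrδ⟩, -⟩ := hrad n b b.2
    exact (ediam_closedBall_le_ofReal _ (by linarith)).trans
      (ENNReal.ofReal_le_ofReal (by linarith))
  have hlim : Tendsto (fun n : ℕ => ENNReal.ofReal (8 * (δ / (n + 1)))) atTop (𝓝 0) := by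
    rw [← ENNReal.ofReal_zero, ← mul_zero 8]
    exact ENNReal.tendsto_ofReal (tendsto_const_div_atTop_nhds_zero_nat δ |>.comp
      (tendsto_add_atTop_nat 1) |>.congr (fun n => by simp) |>.const_mul 8)
  refine (Measure.hausdorffMeasure_le_liminf_tsum α A _ hlim
    (fun n (b : u n) => closedBall (b : X) (4 * rad n b))
    (.of_forall hdiam) (.of_forall fun n x hx => ?_)).trans <|
    liminf_le_of_frequently_le' (.of_forall fun n => ?_)
  · obtain ⟨b, hb, hxb⟩ := mem_iUnion₂.mp (hcov n hx)
    exact mem_iUnion.mpr ⟨⟨b, hb⟩, hxb⟩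
  · refine (tsum_ediam_closedBall_rpow_le hα (hu n) (hdisj n)
      (fun b hb => ⟨(hrad n b hb).1.1.le, (hrad n b hb).2⟩) zero_le_four).trans ?_
    norm_num only
    gcongr
    refine iUnion₂_subset fun b hb => closedBall_subset_cthickening (huA n hb) _ |>.trans ?_
    obtain ⟨⟨-, hrδ⟩, -⟩ := hrad n b hb
    exact cthickening_mono (hrδ.trans (div_le_self hδ.le (by linarith))) A

end MassDistributionPrinciple

lemma holderExpOn_congr {f g : ℝ → ℝ} {s : Set ℝ} (hfg : EqOn f g s) (x : ℝ) :
    holderExpOn f s x = holderExpOn g s x := by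
  have hev : ∀ᶠ y in 𝓝[s] x, f y = g y := eventually_mem_nhdsWithin.mono hfg
  simp only [holderExpOn]
  refine iSup_congr fun α => iSup_congr_Prop (exists_congr fun P => and_congr_right fun _ =>
    exists_congr fun C => and_congr_right fun _ => eventually_congr ?_) fun _ => rfl
  exact hev.mono fun y hy => by rw [hy]

lemma holderExpOn_le_holderExpOn_neg (f : ℝ → ℝ) (s : Set ℝ) (x : ℝ) :
    holderExpOn f s x ≤ holderExpOn (-f) s x := by
  refine iSup₂_mono' fun α ⟨P, hdeg, C, hC, hev⟩ =>
    ⟨α, ⟨-P, by simpa using hdeg, C, hC, ?_⟩, le_rfl⟩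
  filter_upwards [hev] with y hy
  rwa [Pi.neg_apply, Polynomial.eval_neg, neg_sub_neg, abs_sub_comm]

lemma holderExpOn_neg (f : ℝ → ℝ) (s : Set ℝ) (x : ℝ) :
    holderExpOn (-f) s x = holderExpOn f s x :=
  le_antisymm (by simpa using holderExpOn_le_holderExpOn_neg (-f) s x)
    (holderExpOn_le_holderExpOn_neg f s x)

lemma le_holderExpOn_of_eventually_le {f : ℝ → ℝ} {s : Set ℝ} {x : ℝ} {α : ℝ≥0} (hα : 0 < α)
    {C : ℝ} (hC : 0 < C) (hf : ∀ᶠ y in 𝓝[s] x, |f y - f x| ≤ C * |y - x| ^ (α : ℝ)) :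
    (α : ℝ≥0∞) ≤ holderExpOn f s x :=
  le_iSup₂ (f := fun (β : ℝ≥0) (_ : ∃ P : Polynomial ℝ, (P.natDegree : ℝ) < β ∧
      ∃ C > (0:ℝ), ∀ᶠ y in 𝓝[s] x, |f y - P.eval (y - x)| ≤ C * |y - x| ^ (β : ℝ)) => (β : ℝ≥0∞))
    α ⟨Polynomial.C (f x), by simpa using hα, C, hC, by simpa using hf⟩

lemma frequently_lt_abs_sub_of_holderExpOn_lt {f : ℝ → ℝ} {s : Set ℝ} {x : ℝ} {α : ℝ≥0}
    (hx : holderExpOn f s x < α) {C : ℝ} (hC : 0 < C) :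
    ∃ᶠ y in 𝓝[s] x, C * |y - x| ^ (α : ℝ) < |f y - f x| := by
  by_contra! hle
  exact hx.not_ge (le_holderExpOn_of_eventually_le (by simpa using pos_of_gt hx) hC hle)

lemma Monotone.ofReal_sub_le_measure_Ioc {f : ℝ → ℝ} (hf : Monotone f) {a' a : ℝ} (ha : a' < a)
    (b : ℝ) : ENNReal.ofReal (f b - f a) ≤ hf.stieltjesFunction.measure (Ioc a' b) := by
  rw [StieltjesFunction.measure_Ioc, hf.stieltjesFunction_eq, hf.stieltjesFunction_eq]
  exact ENNReal.ofReal_le_ofReal (by linarith [hf.le_rightLim (le_refl b), hf.rightLim_le ha])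

lemma Monotone.ofReal_abs_sub_le_measure_closedBall {f : ℝ → ℝ} (hf : Monotone f) (x y : ℝ) :
    ENNReal.ofReal |f y - f x| ≤ hf.stieltjesFunction.measure (closedBall x (2 * |y - x|)) := by
  rcases lt_trichotomy x y with hxy | rfl | hyx
  · rw [abs_of_nonneg (sub_nonneg.2 (hf hxy.le)), abs_of_pos (sub_pos.2 hxy)]
    refine (hf.ofReal_sub_le_measure_Ioc (by linarith : 2 * x - y < x) y).trans (measure_mono ?_)
    intro z ⟨hz₁, hz₂⟩
    rw [mem_closedBall, Real.dist_eq, abs_le]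
    constructor <;> linarith
  · simp
  · rw [abs_of_nonpos (sub_nonpos.2 (hf hyx.le)), abs_of_neg (sub_neg.2 hyx), neg_sub, neg_sub]
    refine (hf.ofReal_sub_le_measure_Ioc (by linarith : 2 * y - x < y) x).trans (measure_mono ?_)
    intro z ⟨hz₁, hz₂⟩
    rw [mem_closedBall, Real.dist_eq, abs_le]
    constructor <;> linarith

lemma Monotone.frequently_rpow_le_measure_closedBall {f : ℝ → ℝ} (hf : Monotone f) {s : Set ℝ}
    {x : ℝ} {α : ℝ≥0} (hx : holderExpOn f s x < α) :
    ∃ᶠ r in 𝓝[>] 0,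
      ENNReal.ofReal (r ^ (α : ℝ)) ≤ hf.stieltjesFunction.measure (closedBall x r) := by
  have hα : 0 < (α : ℝ) := by simpa using pos_of_gt hx
  have hfreq := (frequently_lt_abs_sub_of_holderExpOn_lt hx
    (Real.rpow_pos_of_pos two_pos α)).filter_mono nhdsWithin_le_nhds
  have hlim : Tendsto (fun y => 2 * |y - x|) (𝓝 x) (𝓝 0) := by
    simpa using (((continuous_id.sub (continuous_const (y := x))).abs).const_mul 2).tendsto x
  rw [frequently_nhdsWithin_iff]
  refine hlim.frequently_map _ (fun y hy => ⟨?_, ?_⟩) hfreq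
  · calc ENNReal.ofReal ((2 * |y - x|) ^ (α : ℝ))
        ≤ ENNReal.ofReal |f y - f x| := by
          rw [Real.mul_rpow zero_le_two (abs_nonneg _)]; exact ENNReal.ofReal_le_ofReal hy.le
      _ ≤ _ := hf.ofReal_abs_sub_le_measure_closedBall x y
  · rcases eq_or_ne y x with rfl | hyx
    · simp [Real.zero_rpow hα.ne'] at hy
    · exact mul_pos two_pos (abs_pos.2 (sub_ne_zero.2 hyx))

theorem Monotone.dimH_le_of_holderExpOn_le {f : ℝ → ℝ} (hf : Monotone f) (s : Set ℝ)
    {A : Set ℝ} (hA : Bornology.IsBounded A) {t : ℝ≥0∞} (ht : ∀ x ∈ A, holderExpOn f s x ≤ t) :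
    dimH A ≤ t := by
  refine dimH_le fun α hα => le_of_not_gt fun htα => ?_
  have hμH := hausdorffMeasure_le_of_frequently_rpow_le_measure_closedBall
    (by simpa using pos_of_gt htα) (fun x hx => hf.frequently_rpow_le_measure_closedBall
      ((ht x hx).trans_lt htα)) one_pos
  rw [hα, top_le_iff] at hμH
  exact ENNReal.mul_ne_top ENNReal.ofReal_ne_top hA.cthickening.measure_lt_top.ne hμH

theorem MonotoneOn.dimH_le_of_holderExpOn_le {g : ℝ → ℝ} {a b : ℝ}
    (hg : MonotoneOn g (Icc a b)) {A : Set ℝ} (hA : A ⊆ Icc a b) {t : ℝ≥0∞}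
    (ht : ∀ x ∈ A, holderExpOn g (Icc a b) x ≤ t) :
    dimH A ≤ t := by
  obtain ⟨f, hf, hgf⟩ := hg.exists_monotone_extension (bddBelow_Icc.mono hg.image_Icc_subset)
    (bddAbove_Icc.mono hg.image_Icc_subset)
  exact hf.dimH_le_of_holderExpOn_le _ (isBounded_Icc a b |>.subset hA) fun x hx =>
    holderExpOn_congr hgf x ▸ ht x hx

theorem dimH_level_le_of_monotone_general
    (g : ℝ → ℝ)
    (hg : MonotoneOn g (Set.Icc (0:ℝ) 1) ∨ AntitoneOn g (Set.Icc (0:ℝ) 1))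
    (h : ℝ) :
    dimH {x ∈ Set.Icc (0:ℝ) 1 | holderExpOn g (Set.Icc (0:ℝ) 1) x ≤ ENNReal.ofReal h}
      ≤ ENNReal.ofReal h := by
  rcases hg with hmono | hanti
  · exact hmono.dimH_le_of_holderExpOn_le (sep_subset _ _) fun x hx => hx.2
  · exact hanti.neg.dimH_le_of_holderExpOn_le (sep_subset _ _) fun x hx =>
      (holderExpOn_neg g _ x).trans_le hx.2

theorem dimH_level_le_of_monotone
    (g : ℝ → ℝ)
    (hg : MonotoneOn g (Set.Icc (0:ℝ) 1) ∨ AntitoneOn g (Set.Icc (0:ℝ) 1))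
    (h : ℝ) (h0 : 0 ≤ h) (h1 : h ≤ 1) :
    dimH {x ∈ Set.Icc (0:ℝ) 1 | holderExpOn g (Set.Icc (0:ℝ) 1) x ≤ ENNReal.ofReal h}
      ≤ ENNReal.ofReal h :=
  dimH_level_le_of_monotone_general g hg h
end

section
/- Suppose f : [0,1]^d → ℝ is convex, continuous, and C¹. For every ε > 0 there exists ϱ > 0 such that for every continuous convex g with ‖g − f‖_∞ < ϱ, every j ∈ {1,…,d}, and every point x with x_j ∈ [ε, 1−ε] and all other coordinates in [0,1], one has |∂_{j,±} g(x) − ∂_j f(x)| < ε, where ∂_{j,±} denote the one-sided partial derivatives in the j-th coordinate. -/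
/-!
Restricted to the line through `x` in direction `e_j`, both `g` and `f` are convex functions of
one variable. Both one-sided derivatives of `g` at `a = x j` lie between the secant slopes of `g`
over `[a - h, a]` and `[a, a + h]`; these differ from the corresponding slopes of `f` by at most
`2ϱ / h`, and the slopes of `f` are squeezed between `∂_j f` at `a - h` and at `a + h`. Since
`f` is `C¹` on the compact cube, its partial derivatives are uniformly continuous; taking `h`
below `ε` and below the modulus of continuity for `ε / 4`, and `ϱ = ε h / 8`, makes each of the
two error terms at most `ε / 4`.
-/

open Filter Set

/-- The partial derivative of `f` in the `j`-th coordinate at `x`. -/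
noncomputable def pderiv' {d : ℕ} (f : (Fin d → ℝ) → ℝ) (j : Fin d) (x : Fin d → ℝ) : ℝ :=
  deriv (fun t => f (Function.update x j t)) (x j)

/-- The right partial derivative of `f` in the `j`-th coordinate at `x`. -/
noncomputable def pderivPlus {d : ℕ} (f : (Fin d → ℝ) → ℝ) (j : Fin d) (x : Fin d → ℝ) : ℝ :=
  derivWithin (fun t => f (Function.update x j t)) (Set.Ioi (x j)) (x j)

/-- The left partial derivative of `f` in the `j`-th coordinate at `x`. -/
noncomputable def pderivMinus {d : ℕ} (f : (Fin d → ℝ) → ℝ) (j : Fin d) (x : Fin d → ℝ) : ℝ :=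
  derivWithin (fun t => f (Function.update x j t)) (Set.Iio (x j)) (x j)

open Function Topology

lemma Convex.mem_interior_of_lt {S : Set ℝ} {a b c : ℝ} (hS : Convex ℝ S) (hc : c ∈ S)
    (hb : b ∈ S) (hca : c < a) (hab : a < b) : a ∈ interior S :=
  interior_mono (hS.ordConnected.out hc hb) (by rw [interior_Icc]; exact ⟨hca, hab⟩)

lemma abs_slope_sub_slope_lt {u v : ℝ → ℝ} {a b r : ℝ} (hab : a < b)
    (ha : |u a - v a| < r) (hb : |u b - v b| < r) :
    |slope u a b - slope v a b| < 2 * r / (b - a) := by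
  have hba : 0 < b - a := sub_pos.2 hab
  rw [slope_def_field, slope_def_field, ← sub_div, abs_div, abs_of_pos hba,
    div_lt_div_iff_of_pos_right hba]
  calc |u b - u a - (v b - v a)| = |(u b - v b) - (u a - v a)| := by ring_nf
    _ ≤ |u b - v b| + |u a - v a| := abs_sub _ _
    _ < 2 * r := by linarith

namespace ConvexOn

variable {S : Set ℝ} {φ : ℝ → ℝ} {a b c : ℝ}

lemma leftDeriv_mem_Icc_slope (hφ : ConvexOn ℝ S φ) (hc : c ∈ S) (hb : b ∈ S)
    (hca : c < a) (hab : a < b) :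
    derivWithin φ (Iio a) a ∈ Icc (slope φ c a) (slope φ a b) := by
  have ha := hφ.1.mem_interior_of_lt hc hb hca hab
  exact ⟨hφ.slope_le_leftDeriv_of_mem_interior hc ha hca,
    (hφ.leftDeriv_le_rightDeriv_of_mem_interior ha).trans
      (hφ.rightDeriv_le_slope_of_mem_interior ha hb hab)⟩

lemma rightDeriv_mem_Icc_slope (hφ : ConvexOn ℝ S φ) (hc : c ∈ S) (hb : b ∈ S)
    (hca : c < a) (hab : a < b) :
    derivWithin φ (Ioi a) a ∈ Icc (slope φ c a) (slope φ a b) := by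
  have ha := hφ.1.mem_interior_of_lt hc hb hca hab
  exact ⟨(hφ.slope_le_leftDeriv_of_mem_interior hc ha hca).trans
      (hφ.leftDeriv_le_rightDeriv_of_mem_interior ha),
    hφ.rightDeriv_le_slope_of_mem_interior ha hb hab⟩

lemma abs_rightDeriv_sub_lt_and_abs_leftDeriv_sub_lt {ψ : ℝ → ℝ} {h r η L ψ₁ ψ₂ : ℝ}
    (hφ : ConvexOn ℝ S φ) (hψ : ConvexOn ℝ S ψ) (hh : 0 < h)
    (hc : a - h ∈ S) (hb : a + h ∈ S) (hψ₁ : HasDerivAt ψ ψ₁ (a - h))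
    (hψ₂ : HasDerivAt ψ ψ₂ (a + h)) (hL₁ : |ψ₁ - L| < η) (hL₂ : |ψ₂ - L| < η)
    (hφψ : ∀ t ∈ ({a - h, a, a + h} : Set ℝ), |φ t - ψ t| < r) :
    |derivWithin φ (Ioi a) a - L| < η + 2 * r / h ∧
      |derivWithin φ (Iio a) a - L| < η + 2 * r / h := by
  have hca : a - h < a := by linarith
  have hab : a < a + h := by linarith
  suffices key : ∀ D ∈ Icc (slope φ (a - h) a) (slope φ a (a + h)), |D - L| < η + 2 * r / h
    from ⟨key _ (hφ.rightDeriv_mem_Icc_slope hc hb hca hab),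
      key _ (hφ.leftDeriv_mem_Icc_slope hc hb hca hab)⟩
  intro D hD
  have ha : a ∈ S := hψ.1.ordConnected.out hc hb ⟨hca.le, hab.le⟩
  have hψ₁_le : ψ₁ ≤ slope ψ (a - h) a := hψ.le_slope_of_hasDerivAt hc ha hca hψ₁
  have hle_ψ₂ : slope ψ a (a + h) ≤ ψ₂ := hψ.slope_le_of_hasDerivAt ha hb hab hψ₂
  have hslope₁ := abs_slope_sub_slope_lt hca (hφψ _ (by simp)) (hφψ _ (by simp))
  have hslope₂ := abs_slope_sub_slope_lt hab (hφψ _ (by simp)) (hφψ _ (by simp))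
  rw [sub_sub_cancel] at hslope₁
  rw [add_sub_cancel_left] at hslope₂
  rw [abs_lt] at *
  constructor <;> linarith [hD.1, hD.2]

end ConvexOn

section update

variable {ι : Type*} [DecidableEq ι]

lemma ConvexOn.comp_update {s : Set (ι → ℝ)} {F : (ι → ℝ) → ℝ} (hF : ConvexOn ℝ s F)
    (x : ι → ℝ) (j : ι) :
    ConvexOn ℝ (update x j ⁻¹' s) (fun t => F (update x j t)) :=
  hF.comp_affineMap ⟨update x j, LinearMap.single ℝ (fun _ => ℝ) j, fun t v => by
    ext i
    rcases eq_or_ne i j with rfl | hij <;> simp [*]⟩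

lemma update_mem_Icc {a b x : ι → ℝ} (hx : x ∈ Icc a b) {j : ι} {t : ℝ}
    (ht : t ∈ Icc (a j) (b j)) : update x j t ∈ Icc a b := by
  rw [← pi_univ_Icc] at hx ⊢
  exact (update_mem_pi_iff_of_mem hx).2 fun _ => ht

lemma ConvexOn.comp_update_Icc {a b x : ι → ℝ} {F : (ι → ℝ) → ℝ}
    (hF : ConvexOn ℝ (Icc a b) F) (hx : x ∈ Icc a b) (j : ι) :
    ConvexOn ℝ (Icc (a j) (b j)) (fun t => F (update x j t)) :=
  (hF.comp_update x j).subset (fun _ => update_mem_Icc hx) (convex_Icc _ _)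

variable [Fintype ι]

lemma ContDiffOn.exists_pos_abs_fderivWithin_single_sub_lt {a b : ι → ℝ}
    (hab : ∀ i, a i < b i) {f : (ι → ℝ) → ℝ} (hf : ContDiffOn ℝ 1 f (Icc a b))
    {η : ℝ} (hη : 0 < η) :
    ∃ δ > (0 : ℝ), ∀ j, ∀ x ∈ Icc a b, ∀ y ∈ Icc a b, ‖x - y‖ < δ →
      |fderivWithin ℝ f (Icc a b) x (Pi.single j 1) -
        fderivWithin ℝ f (Icc a b) y (Pi.single j 1)| < η := by
  have hu : UniqueDiffOn ℝ (Icc a b) := by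
    rw [← pi_univ_Icc]
    exact UniqueDiffOn.univ_pi fun i => uniqueDiffOn_Icc (hab i)
  obtain ⟨δ, hδ, hDδ⟩ := Metric.uniformContinuousOn_iff.mp
    (isCompact_Icc.uniformContinuousOn_of_continuous (hf.continuousOn_fderivWithin hu le_rfl))
    η hη
  refine ⟨δ, hδ, fun j x hx y hy hxy => ?_⟩
  set D := fderivWithin ℝ f (Icc a b)
  calc _ ≤ ‖D x - D y‖ := by
        simpa [Pi.norm_single] using (D x - D y).le_opNorm (Pi.single j 1)
    _ < η := by rw [← dist_eq_norm]; exact hDδ x hx y hy (by rwa [dist_eq_norm])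

lemma norm_update_sub_self (x : ι → ℝ) (j : ι) (t : ℝ) :
    ‖update x j t - x‖ = |t - x j| := by
  have : update x j t - x = Pi.single j (t - x j) := by
    ext i
    rcases eq_or_ne i j with rfl | hij <;> simp [*]
  rw [this, Pi.norm_single, Real.norm_eq_abs]

lemma HasFDerivWithinAt.hasDerivAt_comp_update {𝕜 F : Type*} [NontriviallyNormedField 𝕜]
    [NormedAddCommGroup F] [NormedSpace 𝕜 F] {f : (ι → 𝕜) → F}
    {f' : (ι → 𝕜) →L[𝕜] F} {s : Set (ι → 𝕜)} {x : ι → 𝕜} {j : ι} {t : 𝕜}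
    (hf : HasFDerivWithinAt f f' s (update x j t)) (hs : update x j ⁻¹' s ∈ 𝓝 t) :
    HasDerivAt (fun t => f (update x j t)) (f' (Pi.single j 1)) t :=
  (hf.comp_hasDerivWithinAt t (hasDerivAt_update x j t).hasDerivWithinAt
    (mapsTo_preimage _ s)).hasDerivAt hs

lemma DifferentiableOn.hasDerivAt_comp_update_Icc {a b x : ι → ℝ} {f : (ι → ℝ) → ℝ}
    (hf : DifferentiableOn ℝ f (Icc a b)) (hx : x ∈ Icc a b) {j : ι} {t : ℝ}
    (ht : t ∈ Ioo (a j) (b j)) :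
    HasDerivAt (fun t => f (update x j t))
      (fderivWithin ℝ f (Icc a b) (update x j t) (Pi.single j 1)) t :=
  (hf _ (update_mem_Icc hx (Ioo_subset_Icc_self ht))).hasFDerivWithinAt.hasDerivAt_comp_update
    (mem_of_superset (Icc_mem_nhds ht.1 ht.2) fun _ => update_mem_Icc hx)

end update

theorem oneSided_pderiv_close_of_sup_close_general
    (d : ℕ) (f : (Fin d → ℝ) → ℝ)
    (hconv : ConvexOn ℝ (Set.Icc (0 : Fin d → ℝ) 1) f)
    (hC1 : ContDiffOn ℝ 1 f (Set.Icc (0 : Fin d → ℝ) 1)) :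
    ∀ ε > (0:ℝ), ∃ ϱ > (0:ℝ), ∀ g : (Fin d → ℝ) → ℝ,
      ContinuousOn g (Set.Icc (0 : Fin d → ℝ) 1) →
      ConvexOn ℝ (Set.Icc (0 : Fin d → ℝ) 1) g →
      (∀ x ∈ Set.Icc (0 : Fin d → ℝ) 1, |g x - f x| < ϱ) →
      ∀ j : Fin d, ∀ x ∈ Set.Icc (0 : Fin d → ℝ) 1, x j ∈ Set.Icc ε (1 - ε) →
        |pderivPlus g j x - pderiv' f j x| < ε ∧
        |pderivMinus g j x - pderiv' f j x| < ε := by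
  intro ε hε
  obtain ⟨δ, hδ, hDδ⟩ := hC1.exists_pos_abs_fderivWithin_single_sub_lt (fun _ => zero_lt_one)
    (show 0 < ε / 4 by positivity)
  obtain ⟨h, hh, hhδ, hhε⟩ : ∃ h : ℝ, 0 < h ∧ h < δ ∧ h < ε :=
    ⟨min δ ε / 2, by positivity, by linarith [min_le_left δ ε],
      by linarith [min_le_right δ ε]⟩
  refine ⟨ε * h / 8, by positivity, fun g _ hg hgf j x hx hxj => ?_⟩
  obtain ⟨ha₀, ha₁⟩ := hxj
  have ha : x j ∈ Ioo (0 : ℝ) 1 := ⟨by linarith, by linarith⟩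
  have hc : x j - h ∈ Ioo (0 : ℝ) 1 := ⟨by linarith, by linarith⟩
  have hb : x j + h ∈ Ioo (0 : ℝ) 1 := ⟨by linarith, by linarith⟩
  have hline : ∀ t ∈ Icc (0 : ℝ) 1, update x j t ∈ Icc 0 1 := fun t => update_mem_Icc hx
  set D : ℝ → ℝ := fun t => fderivWithin ℝ f (Icc 0 1) (update x j t) (Pi.single j 1)
  have hfD : ∀ t ∈ Ioo (0 : ℝ) 1, HasDerivAt (fun t => f (update x j t)) (D t) t :=
    fun t ht => (hC1.differentiableOn one_ne_zero).hasDerivAt_comp_update_Icc hx (j := j) ht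
  have hD : ∀ t ∈ Ioo (0 : ℝ) 1, |t - x j| ≤ h → |D t - D (x j)| < ε / 4 :=
    fun t ht hth => hDδ j _ (hline t (mem_Icc_of_Ioo ht)) _ (hline _ (mem_Icc_of_Ioo ha))
      (by rw [update_eq_self, norm_update_sub_self]; linarith)
  have hgf_line : ∀ t ∈ ({x j - h, x j, x j + h} : Set ℝ),
      |g (update x j t) - f (update x j t)| < ε * h / 8 := by
    rintro t (rfl | rfl | rfl) <;> exact hgf _ (hline _ ⟨by linarith, by linarith⟩)
  have hbound : ε / 4 + 2 * (ε * h / 8) / h < ε := by field_simp; linarith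
  obtain ⟨hplus, hminus⟩ :=
    (hg.comp_update_Icc hx j).abs_rightDeriv_sub_lt_and_abs_leftDeriv_sub_lt
      (hconv.comp_update_Icc hx j) hh (mem_Icc_of_Ioo hc) (mem_Icc_of_Ioo hb) (hfD _ hc)
      (hfD _ hb) (hD _ hc (by simp [abs_of_pos hh])) (hD _ hb (by simp [abs_of_pos hh])) hgf_line
  rw [pderivPlus, pderivMinus, pderiv', (hfD (x j) ha).deriv]
  exact ⟨hplus.trans hbound, hminus.trans hbound⟩

theorem oneSided_pderiv_close_of_sup_close
    (d : ℕ) (f : (Fin d → ℝ) → ℝ)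
    (hcont : ContinuousOn f (Set.Icc (0 : Fin d → ℝ) 1))
    (hconv : ConvexOn ℝ (Set.Icc (0 : Fin d → ℝ) 1) f)
    (hC1 : ContDiffOn ℝ 1 f (Set.Icc (0 : Fin d → ℝ) 1)) :
    ∀ ε > (0:ℝ), ∃ ϱ > (0:ℝ), ∀ g : (Fin d → ℝ) → ℝ,
      ContinuousOn g (Set.Icc (0 : Fin d → ℝ) 1) →
      ConvexOn ℝ (Set.Icc (0 : Fin d → ℝ) 1) g →
      (∀ x ∈ Set.Icc (0 : Fin d → ℝ) 1, |g x - f x| < ϱ) →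
      ∀ j : Fin d, ∀ x ∈ Set.Icc (0 : Fin d → ℝ) 1, x j ∈ Set.Icc ε (1 - ε) →
        |pderivPlus g j x - pderiv' f j x| < ε ∧
        |pderivMinus g j x - pderiv' f j x| < ε :=
  oneSided_pderiv_close_of_sup_close_general d f hconv hC1
end

section
/- Suppose f : [0,1] → ℝ is convex, continuous and C¹. For every ε > 0 there exists ϱ > 0 such that for all continuous convex g : [0,1] → ℝ with ‖g − f‖_∞ < ϱ and all x ∈ [ε, 1−ε], |g'_±(x) − f'(x)| < ε. -/
/-!
Both one-sided derivatives of a convex `g` at `x` are squeezed between the secant slopes of `g`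
over `[x - h, x]` and `[x, x + h]`. If `|g - f| < ϱ`, these differ from the corresponding slopes
of `f` by less than `2ϱ / h`, and by the mean value theorem and the uniform continuity of `f'` the
slopes of `f` over short intervals are uniformly close to `f'(x)`. Taking `h` small and then
`ϱ` small compared with `h` gives the estimate.
-/

open Set

theorem abs_slope_sub_slope_le (f g : ℝ → ℝ) {a b : ℝ} (hab : a < b) :
    |slope g a b - slope f a b| ≤ (|g a - f a| + |g b - f b|) / (b - a) := by
  rw [slope_def_field, slope_def_field, ← sub_div, abs_div, abs_of_pos (sub_pos.2 hab)]
  gcongr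
  calc |g b - g a - (f b - f a)| = |(g b - f b) - (g a - f a)| := by ring_nf
    _ ≤ |g b - f b| + |g a - f a| := abs_sub _ _
    _ = |g a - f a| + |g b - f b| := add_comm _ _

theorem ContDiffOn.exists_pos_abs_slope_sub_derivWithin_lt {f : ℝ → ℝ} {p q : ℝ}
    (hf : ContDiffOn ℝ 1 f (Icc p q)) (hpq : p < q) {ε : ℝ} (hε : 0 < ε) :
    ∃ δ > 0, ∀ a ∈ Icc p q, ∀ b ∈ Icc p q, ∀ x ∈ Icc a b, a < b → b - a < δ →
      |slope f a b - derivWithin f (Icc p q) x| < ε := by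
  have hcont : ContinuousOn (derivWithin f (Icc p q)) (Icc p q) :=
    hf.continuousOn_derivWithin (uniqueDiffOn_Icc hpq) le_rfl
  obtain ⟨δ, hδ, hunif⟩ := Metric.uniformContinuousOn_iff.1
    (isCompact_Icc.uniformContinuousOn_of_continuous hcont) ε hε
  refine ⟨δ, hδ, fun a ha b hb x hx hab hba => ?_⟩
  have hsub : Icc a b ⊆ Icc p q := Icc_subset_Icc ha.1 hb.2
  have hderiv : ∀ c ∈ Ioo a b, HasDerivAt f (derivWithin f (Icc p q) c) c := fun c hc =>
    (hf.differentiableOn one_ne_zero c (hsub (Ioo_subset_Icc_self hc))).hasDerivWithinAt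
      |>.hasDerivAt (Icc_mem_nhds (ha.1.trans_lt hc.1) (hc.2.trans_le hb.2))
  obtain ⟨c, hc, hc_slope⟩ :=
    exists_hasDerivAt_eq_slope f _ hab (hf.continuousOn.mono hsub) hderiv
  rw [slope_def_field, ← hc_slope, ← Real.dist_eq]
  exact hunif c (hsub (Ioo_subset_Icc_self hc)) x (hsub hx)
    ((Real.dist_le_of_mem_Icc (Ioo_subset_Icc_self hc) hx).trans_lt hba)

theorem ConvexOn.leftDeriv_rightDeriv_mem_Icc_slope {g : ℝ → ℝ} {S : Set ℝ} {a x b : ℝ}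
    (hg : ConvexOn ℝ S g) (ha : a ∈ S) (hb : b ∈ S) (hax : a < x) (hxb : x < b) :
    derivWithin g (Iio x) x ∈ Icc (slope g a x) (slope g x b) ∧
      derivWithin g (Ioi x) x ∈ Icc (slope g a x) (slope g x b) := by
  have hx : x ∈ interior S :=
    interior_mono (hg.1.ordConnected.out ha hb) (by rw [interior_Icc]; exact ⟨hax, hxb⟩)
  have hleft := hg.slope_le_leftDeriv_of_mem_interior ha hx hax
  have hmid := hg.leftDeriv_le_rightDeriv_of_mem_interior hx
  have hright := hg.rightDeriv_le_slope_of_mem_interior hx hb hxb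
  exact ⟨⟨hleft, hmid.trans hright⟩, ⟨hleft.trans hmid, hright⟩⟩

theorem oneSided_deriv_close_of_sup_close_general
    (f : ℝ → ℝ)
    (hC1 : ContDiffOn ℝ 1 f (Set.Icc (0:ℝ) 1)) :
    ∀ ε > (0:ℝ), ∃ ϱ > (0:ℝ), ∀ g : ℝ → ℝ,
      ContinuousOn g (Set.Icc (0:ℝ) 1) →
      ConvexOn ℝ (Set.Icc (0:ℝ) 1) g →
      (∀ x ∈ Set.Icc (0:ℝ) 1, |g x - f x| < ϱ) →
      ∀ x ∈ Set.Icc ε (1 - ε),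
        |derivWithin g (Set.Ioi x) x - deriv f x| < ε ∧
        |derivWithin g (Set.Iio x) x - deriv f x| < ε := by
  intro ε hε
  obtain ⟨δ, hδ, hf_slope⟩ :=
    hC1.exists_pos_abs_slope_sub_derivWithin_lt one_pos (half_pos hε)
  set h := min (δ / 2) ε
  have hh : 0 < h := lt_min (half_pos hδ) hε
  refine ⟨h * ε / 4, by positivity, fun g _ hg hclose x hx => ?_⟩
  have hderiv : derivWithin f (Icc 0 1) x = deriv f x :=
    derivWithin_of_mem_nhds (Icc_mem_nhds (hε.trans_le hx.1) (by linarith [hx.2]))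
  have hg_slope : ∀ a ∈ Icc (0:ℝ) 1, ∀ b ∈ Icc (0:ℝ) 1, x ∈ Icc a b → b - a = h →
      |slope g a b - deriv f x| < ε := by
    intro a ha b hb hxab hba
    have hgf : (|g a - f a| + |g b - f b|) / (b - a) < ε / 2 := by
      rw [hba, div_lt_iff₀ hh]; linarith [hclose a ha, hclose b hb]
    have hfx := hf_slope a ha b hb x hxab (by linarith) (by linarith [min_le_left (δ / 2) ε])
    rw [← hderiv]
    linarith [abs_sub_le (slope g a b) (slope f a b) (derivWithin f (Icc 0 1) x),
      abs_slope_sub_slope_le f g (by linarith : a < b)]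
  have hle : h ≤ ε := min_le_right _ _
  have hx₀ : x - h ∈ Icc (0:ℝ) 1 := ⟨by linarith [hx.1], by linarith [hx.2]⟩
  have hx₁ : x ∈ Icc (0:ℝ) 1 := ⟨by linarith [hx.1], by linarith [hx.2]⟩
  have hx₂ : x + h ∈ Icc (0:ℝ) 1 := ⟨by linarith [hx.1], by linarith [hx.2]⟩
  have hlo := hg_slope _ hx₀ _ hx₁ ⟨by linarith, le_rfl⟩ (by ring)
  have hhi := hg_slope _ hx₁ _ hx₂ ⟨le_rfl, by linarith⟩ (by ring)
  obtain ⟨⟨hL₁, hL₂⟩, ⟨hR₁, hR₂⟩⟩ :=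
    hg.leftDeriv_rightDeriv_mem_Icc_slope hx₀ hx₂ (by linarith : x - h < x) (by linarith)
  rw [abs_lt] at hlo hhi
  simp only [abs_lt]
  exact ⟨⟨by linarith, by linarith⟩, ⟨by linarith, by linarith⟩⟩

theorem oneSided_deriv_close_of_sup_close
    (f : ℝ → ℝ)
    (hcont : ContinuousOn f (Set.Icc (0:ℝ) 1))
    (hconv : ConvexOn ℝ (Set.Icc (0:ℝ) 1) f)
    (hC1 : ContDiffOn ℝ 1 f (Set.Icc (0:ℝ) 1)) :
    ∀ ε > (0:ℝ), ∃ ϱ > (0:ℝ), ∀ g : ℝ → ℝ,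
      ContinuousOn g (Set.Icc (0:ℝ) 1) →
      ConvexOn ℝ (Set.Icc (0:ℝ) 1) g →
      (∀ x ∈ Set.Icc (0:ℝ) 1, |g x - f x| < ϱ) →
      ∀ x ∈ Set.Icc ε (1 - ε),
        |derivWithin g (Set.Ioi x) x - deriv f x| < ε ∧
        |derivWithin g (Set.Iio x) x - deriv f x| < ε :=
  oneSided_deriv_close_of_sup_close_general f hC1
end

section
/- There is a dense G_δ set G in the space CC of continuous convex functions on [0,1]^d (with the sup norm) such that every f ∈ G is continuously differentiable on the open cube (0,1)^d. -/
open Filter Set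
open scoped ENNReal NNReal

/-- A continuous map `f` on the cube `[0,1]^d` is convex. -/
def IsConvexMapOnCube {d : ℕ} (f : C(Set.Icc (0 : Fin d → ℝ) 1, ℝ)) : Prop :=
  ∀ (x y z : Set.Icc (0 : Fin d → ℝ) 1) (s t : ℝ), 0 ≤ s → 0 ≤ t → s + t = 1 →
    (z : Fin d → ℝ) = s • (x : Fin d → ℝ) + t • (y : Fin d → ℝ) →
    f z ≤ s * f x + t * f y

/-- The space `CC` of continuous convex functions on `[0,1]^d`, with the sup-norm
(metric) topology inherited from `C([0,1]^d, ℝ)`. -/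
abbrev CCSpace (d : ℕ) := {f : C(Set.Icc (0 : Fin d → ℝ) 1, ℝ) // IsConvexMapOnCube f}

/-!
Against a subgradient `p` of a convex `f` at `x`, the error `e h = f (x + h) - f x - p h` satisfies
`0 ≤ e h ≤ f (x + h) + f (x - h) - 2 f x` and `e (t • h) ≤ t * e h` for `t ∈ [0, 1]`. So second
differences below `δ / (n + 1)` on `‖h‖ ≤ δ` give `|e h| ≤ ‖h‖ / (n + 1)` there. If this holds for
every `n`, locally uniformly on the open cube, the subgradients are Fréchet derivatives, locally
uniformly in `x`, hence continuous in `x`, and `f` is `C¹`. The condition at level `n` (on the cube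
of margin `1 / (n + 1)`) is open by compactness, and dense because the Moreau envelope
`x ↦ inf_y f y + |y - x|² / (2τ)` of `f` (Euclidean `|·|`) is convex, uniformly close to `f` for
small `τ`, and has second differences `≤ |u|² / τ` by the parallelogram law. Convex functions form
a closed, hence complete, subspace of `C([0,1]^d)`, so Baire's theorem makes the intersection over
`n` a dense `G_δ`.
-/

open Metric Topology Asymptotics

section Subgradient

variable {E : Type*} [NormedAddCommGroup E] [NormedSpace ℝ E] {f : E → ℝ} {s : Set E} {x : E}

theorem ConvexOn.exists_subgradient_on_interior (hf : ConvexOn ℝ s f)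
    (hfc : ContinuousOn f (interior s)) (hx : x ∈ interior s) :
    ∃ p : E →L[ℝ] ℝ, ∀ y ∈ interior s, f x + p (y - x) ≤ f y := by
  set U : Set (E × ℝ) := {q | q.1 ∈ interior s ∧ f q.1 < q.2}
  have hU_convex : Convex ℝ U := (hf.subset interior_subset hf.1.interior).convex_strict_epigraph
  have hU_open : IsOpen U :=
    ((hfc.comp continuousOn_fst fun _ hq => hq).prodMk continuousOn_snd).isOpen_inter_preimage
      (isOpen_interior.preimage continuous_fst) (isOpen_lt continuous_fst continuous_snd)
  obtain ⟨ℓ, hℓ⟩ := geometric_hahn_banach_open_point hU_convex hU_open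
    (x := (x, f x)) fun h => lt_irrefl _ h.2
  set a := ℓ.comp (ContinuousLinearMap.inl ℝ E ℝ)
  set c := ℓ (0, 1)
  have hℓ_apply : ∀ y t, ℓ (y, t) = a y + t * c := fun y t => by
    rw [show ((y, t) : E × ℝ) = (y, 0) + t • (0, 1) by simp, map_add, map_smul, smul_eq_mul]
    rfl
  have hsep : ∀ y ∈ interior s, ∀ t, f y < t → a y + t * c < a x + f x * c := fun y hy t ht => by
    simpa only [hℓ_apply] using hℓ (y, t) ⟨hy, ht⟩
  have hc : c < 0 := by linarith [hsep x hx (f x + 1) (lt_add_one _)]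
  refine ⟨(-c)⁻¹ • a, fun y hy => ?_⟩
  have hsupport : a y + f y * c ≤ a x + f x * c := le_of_forall_pos_lt_add fun ε hε => by
    have := hsep y hy (f y + ε / -c) (lt_add_of_pos_right _ (div_pos hε (neg_pos.2 hc)))
    have hεc : ε / -c * c = -ε := by field_simp [hc.ne]
    linarith
  have hc' : 0 < -c := neg_pos.2 hc
  simp only [smul_apply, map_sub, smul_eq_mul]
  rw [← le_sub_iff_add_le', ← mul_sub, inv_mul_le_iff₀ hc']
  linarith

theorem ConvexOn.subgradient_of_interior (hf : ConvexOn ℝ s f) (hx : x ∈ interior s)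
    {p : E →ₗ[ℝ] ℝ} (hp : ∀ y ∈ interior s, f x + p (y - x) ≤ f y) :
    ∀ y ∈ s, f x + p (y - x) ≤ f y := by
  intro y hy
  have hmid : (1 / 2 : ℝ) • x + (1 / 2 : ℝ) • y ∈ interior s :=
    hf.1.combo_interior_self_mem_interior hx hy (by norm_num) (by norm_num) (by norm_num)
  have hconv := hf.2 (interior_subset hx) hy (by norm_num : (0 : ℝ) ≤ 1 / 2)
    (by norm_num : (0 : ℝ) ≤ 1 / 2) (by norm_num)
  have hsub : (1 / 2 : ℝ) • x + (1 / 2 : ℝ) • y - x = (1 / 2 : ℝ) • (y - x) := by module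
  have := hp _ hmid
  rw [hsub, map_smul, smul_eq_mul] at this
  simp only [smul_eq_mul] at hconv
  linarith

theorem ConvexOn.exists_subgradient (hf : ConvexOn ℝ s f)
    (hfc : ContinuousOn f (interior s)) (hx : x ∈ interior s) :
    ∃ p : E →L[ℝ] ℝ, ∀ y ∈ s, f x + p (y - x) ≤ f y :=
  let ⟨p, hp⟩ := hf.exists_subgradient_on_interior hfc hx
  ⟨p, hf.subgradient_of_interior hx (p := p.toLinearMap) hp⟩

end Subgradient

section SecondDifference

variable {E : Type*} [AddCommGroup E] [Module ℝ E] {f : E → ℝ} {s : Set E} {x h : E}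

def secondDiff (f : E → ℝ) (x h : E) : ℝ := f (x + h) + f (x - h) - 2 * f x

theorem sub_sub_le_secondDiff {p : E →ₗ[ℝ] ℝ} (hp : ∀ y ∈ s, f x + p (y - x) ≤ f y)
    (hxh : x - h ∈ s) : f (x + h) - f x - p h ≤ secondDiff f x h := by
  have := hp _ hxh
  rw [sub_sub_cancel_left, map_neg] at this
  unfold secondDiff
  linarith

theorem ConvexOn.sub_sub_smul_le (hf : ConvexOn ℝ s f) (hx : x ∈ s) (hxh : x + h ∈ s)
    (p : E →ₗ[ℝ] ℝ) {t : ℝ} (ht₀ : 0 ≤ t) (ht₁ : t ≤ 1) :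
    f (x + t • h) - f x - p (t • h) ≤ t * (f (x + h) - f x - p h) := by
  have := hf.2 hx hxh (sub_nonneg.2 ht₁) ht₀ (sub_add_cancel 1 t)
  rw [show (1 - t) • x + t • (x + h) = x + t • h by module, smul_eq_mul, smul_eq_mul] at this
  rw [map_smul, smul_eq_mul]
  linarith

end SecondDifference

section SecondDiffBound

variable {E : Type*} [NormedAddCommGroup E] [NormedSpace ℝ E] {f : E → ℝ} {s : Set E} {x : E}

theorem ConvexOn.abs_sub_sub_le_of_secondDiff_le (hf : ConvexOn ℝ s f) {p : E →ₗ[ℝ] ℝ}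
    (hp : ∀ y ∈ s, f x + p (y - x) ≤ f y) {δ b : ℝ} (hδ : 0 < δ) (hs : closedBall x δ ⊆ s)
    (hb : ∀ u, ‖u‖ ≤ δ → secondDiff f x u ≤ b) {h : E} (hh : ‖h‖ ≤ δ) :
    |f (x + h) - f x - p h| ≤ b / δ * ‖h‖ := by
  have hmem : ∀ u, ‖u‖ ≤ δ → x + u ∈ s ∧ x - u ∈ s := fun u hu =>
    ⟨hs (by rwa [mem_closedBall, dist_self_add_left]),
      hs (by rwa [mem_closedBall, dist_self_sub_left])⟩
  have hlow : 0 ≤ f (x + h) - f x - p h := by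
    have := hp _ (hmem h hh).1
    rw [add_sub_cancel_left] at this
    linarith
  rw [abs_of_nonneg hlow]
  rcases eq_or_ne h 0 with rfl | h0
  · simp
  have hh₀ : 0 < ‖h‖ := norm_pos_iff.2 h0
  set H := (δ / ‖h‖) • h
  have hH : ‖H‖ = δ := by
    rw [norm_smul, Real.norm_of_nonneg (by positivity), div_mul_cancel₀ _ hh₀.ne']
  have hHh : (‖h‖ / δ) • H = h := by
    rw [smul_smul, show ‖h‖ / δ * (δ / ‖h‖) = 1 by field_simp, one_smul]
  have hscale := hf.sub_sub_smul_le (hs (mem_closedBall_self hδ.le)) (hmem H hH.le).1 p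
    (by positivity) ((div_le_one hδ).2 hh)
  rw [hHh] at hscale
  calc f (x + h) - f x - p h ≤ ‖h‖ / δ * (f (x + H) - f x - p H) := hscale
    _ ≤ ‖h‖ / δ * b := by
        gcongr
        exact (sub_sub_le_secondDiff hp (hmem H hH.le).2).trans (hb H hH.le)
    _ = b / δ * ‖h‖ := by ring

end SecondDiffBound

section LocallyUniformDifferentiability

variable {𝕜 E F : Type*} [NontriviallyNormedField 𝕜] [NormedAddCommGroup E] [NormedSpace 𝕜 E]
  [NormedAddCommGroup F] [NormedSpace 𝕜 F] {f : E → F} {D : E → E →L[𝕜] F} {x : E}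

theorem hasFDerivAt_of_isLittleO_prod
    (h : (fun p : E × E => f (p.1 + p.2) - f p.1 - D p.1 p.2) =o[𝓝 (x, 0)] Prod.snd) :
    HasFDerivAt f (D x) x :=
  hasFDerivAt_iff_isLittleO_nhds_zero.2 <|
    h.comp_tendsto ((continuous_const.prodMk continuous_id).tendsto' 0 (x, 0) rfl)

theorem continuousAt_of_isLittleO_prod
    (h : (fun p : E × E => f (p.1 + p.2) - f p.1 - D p.1 p.2) =o[𝓝 (x, 0)] Prod.snd) :
    ContinuousAt D x := by
  rw [Metric.continuousAt_iff]
  intro ε hε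
  obtain ⟨k, hk⟩ := NormedField.exists_one_lt_norm 𝕜
  obtain ⟨δ, hδ, hδe⟩ := Metric.eventually_nhds_iff.1 (h.def (by positivity : 0 < ε / 8))
  have herr : ∀ a b : E, ‖a - x‖ < δ → ‖b‖ < δ →
      ‖f (a + b) - f a - D a b‖ ≤ ε / 8 * ‖b‖ := fun a b ha hb =>
    hδe (y := (a, b)) (by rw [Prod.dist_eq, dist_eq_norm, dist_zero_right]; exact max_lt ha hb)
  have hk₀ : (0 : ℝ) < ‖k‖ := one_pos.trans hk
  have hr : δ / 2 / ‖k‖ ≤ δ / 2 := div_le_self (by positivity) hk.le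
  refine ⟨δ / 2 / ‖k‖, by positivity, fun {y} hy => ?_⟩
  rw [dist_eq_norm] at hy ⊢
  suffices ‖D y - D x‖ ≤ ε / 2 by linarith
  refine ContinuousLinearMap.opNorm_le_of_shell (half_pos hδ) (by positivity) hk
    fun v hv₁ hv₂ => ?_
  have hyx : ‖y - x + v‖ < δ := (norm_add_le _ _).trans_lt (by linarith)
  have e₁ := herr x (y - x + v) (by simpa using hδ) hyx
  have e₂ := herr y v (by linarith) (by linarith)
  have e₃ := herr x (y - x) (by simpa using hδ) (by linarith)
  have hsplit : (D y - D x) v = (f (x + (y - x + v)) - f x - D x (y - x + v))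
      - (f (y + v) - f y - D y v) - (f (x + (y - x)) - f x - D x (y - x)) := by
    rw [show x + (y - x + v) = y + v by abel, add_sub_cancel, map_add,
      sub_apply]
    abel
  calc ‖(D y - D x) v‖
      ≤ ε / 8 * ‖y - x + v‖ + ε / 8 * ‖v‖ + ε / 8 * ‖y - x‖ := by
        rw [hsplit]
        exact (norm_sub_le _ _).trans (add_le_add ((norm_sub_le _ _).trans (add_le_add e₁ e₂)) e₃)
    _ ≤ ε / 2 * ‖v‖ := by
        nlinarith [norm_add_le (y - x) v, norm_nonneg v, norm_nonneg (y - x)]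

theorem contDiffOn_one_of_isLittleO_prod {s : Set E} (hs : IsOpen s)
    (h : ∀ x ∈ s, (fun p : E × E => f (p.1 + p.2) - f p.1 - D p.1 p.2) =o[𝓝 (x, 0)] Prod.snd) :
    ContDiffOn 𝕜 1 f s := fun _ hx =>
  (contDiffAt_one_iff.2 ⟨D, s, hs.mem_nhds hx,
    fun y hy => (continuousAt_of_isLittleO_prod (h y hy)).continuousWithinAt,
    fun y hy => hasFDerivAt_of_isLittleO_prod (h y hy)⟩).contDiffWithinAt

end LocallyUniformDifferentiability

theorem IsCompact.isOpen_setOf_forall_lt {X Y : Type*} [TopologicalSpace X] [TopologicalSpace Y]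
    {K : Set Y} (hK : IsCompact K) {g : X → Y → ℝ} (hg : Continuous (Function.uncurry g))
    (b : ℝ) : IsOpen {x | ∀ y ∈ K, g x y < b} :=
  isOpen_iff_mem_nhds.2 fun x hx => hK.eventually_forall_of_forall_eventually fun y hy =>
    (hg.tendsto (x, y)).eventually (gt_mem_nhds (hx y hy))

section SumSq

variable {ι : Type*} [Fintype ι]

def sumSq (v : ι → ℝ) : ℝ := ∑ i, v i ^ 2

theorem sumSq_nonneg (v : ι → ℝ) : 0 ≤ sumSq v :=
  Finset.sum_nonneg fun i _ => sq_nonneg (v i)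

theorem continuous_sumSq : Continuous (sumSq : (ι → ℝ) → ℝ) := by
  unfold sumSq; fun_prop

theorem sumSq_add_add_sumSq_sub (v u : ι → ℝ) :
    sumSq (v + u) + sumSq (v - u) = 2 * sumSq v + 2 * sumSq u := by
  simp only [sumSq, ← Finset.sum_add_distrib, Finset.mul_sum, Pi.add_apply, Pi.sub_apply]
  exact Finset.sum_congr rfl fun i _ => by ring

theorem sumSq_combo_le {a b : ℝ} (ha : 0 ≤ a) (hb : 0 ≤ b) (hab : a + b = 1) (v w : ι → ℝ) :
    sumSq (a • v + b • w) ≤ a * sumSq v + b * sumSq w := by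
  simp only [sumSq, Finset.mul_sum, ← Finset.sum_add_distrib]
  refine Finset.sum_le_sum fun i _ => ?_
  simp only [Pi.add_apply, Pi.smul_apply, smul_eq_mul]
  nlinarith [mul_nonneg (mul_nonneg ha hb) (sq_nonneg (v i - w i))]

theorem sq_norm_le_sumSq (v : ι → ℝ) : ‖v‖ ^ 2 ≤ sumSq v := by
  refine (Real.le_sqrt (norm_nonneg v) (sumSq_nonneg v)).1
    ((pi_norm_le_iff_of_nonneg (Real.sqrt_nonneg _)).2 fun i => ?_)
  exact Real.abs_le_sqrt (Finset.single_le_sum (fun j _ => sq_nonneg (v j)) (Finset.mem_univ i))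

theorem sumSq_le_card_mul_sq_norm (v : ι → ℝ) : sumSq v ≤ Fintype.card ι * ‖v‖ ^ 2 := by
  have := Finset.sum_le_card_nsmul Finset.univ (fun i => v i ^ 2) (‖v‖ ^ 2) fun i _ => by
    simpa only [Real.norm_eq_abs, sq_abs] using
      pow_le_pow_left₀ (norm_nonneg _) (norm_le_pi_norm v i) 2
  simpa [sumSq, nsmul_eq_mul] using this

end SumSq

section MoreauEnvelope

variable {ι : Type*} [Fintype ι] {K : Set (ι → ℝ)} {φ : (ι → ℝ) → ℝ} {τ : ℝ} {x : ι → ℝ}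

/-- The infimum runs over `K` only, i.e. `φ` is taken to be `+∞` off `K`. The penalty is the
Euclidean square `sumSq`, not the square of the sup norm, because its parallelogram identity is
what bounds the second differences of the envelope. -/
noncomputable def moreauEnvelope (K : Set (ι → ℝ)) (φ : (ι → ℝ) → ℝ) (τ : ℝ) (x : ι → ℝ) : ℝ :=
  sInf ((fun y => φ y + sumSq (y - x) / (2 * τ)) '' K)

theorem isCompact_image_add_sumSq_div (hK : IsCompact K) (hφ : ContinuousOn φ K) (x : ι → ℝ) :
    IsCompact ((fun y => φ y + sumSq (y - x) / (2 * τ)) '' K) :=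
  hK.image_of_continuousOn <| hφ.add <|
    ((continuous_sumSq.comp (continuous_id.sub continuous_const)).div_const _).continuousOn

theorem moreauEnvelope_le (hK : IsCompact K) (hφ : ContinuousOn φ K) {y : ι → ℝ} (hy : y ∈ K)
    (x : ι → ℝ) : moreauEnvelope K φ τ x ≤ φ y + sumSq (y - x) / (2 * τ) :=
  csInf_le (isCompact_image_add_sumSq_div hK hφ x).bddBelow (mem_image_of_mem _ hy)

theorem exists_moreauEnvelope_eq (hK : IsCompact K) (hK₀ : K.Nonempty) (hφ : ContinuousOn φ K)
    (x : ι → ℝ) : ∃ y ∈ K, φ y + sumSq (y - x) / (2 * τ) = moreauEnvelope K φ τ x :=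
  (isCompact_image_add_sumSq_div hK hφ x).sInf_mem (hK₀.image _)

theorem moreauEnvelope_le_self (hK : IsCompact K) (hφ : ContinuousOn φ K) (hx : x ∈ K) :
    moreauEnvelope K φ τ x ≤ φ x := by
  simpa [sumSq] using moreauEnvelope_le (τ := τ) hK hφ hx x

theorem sub_le_moreauEnvelope (hK : IsCompact K) (hK₀ : K.Nonempty) (hφ : ContinuousOn φ K)
    {M ρ η : ℝ} (hM : ∀ y ∈ K, |φ y| ≤ M) (hρ : 0 ≤ ρ) (hη : 0 ≤ η)
    (hφx : ∀ y ∈ K, dist y x < ρ → φ x ≤ φ y + η) (hτ : 0 < τ) (hτρ : 4 * M * τ ≤ ρ ^ 2)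
    (hx : x ∈ K) : φ x - η ≤ moreauEnvelope K φ τ x := by
  obtain ⟨y, hy, hyx⟩ := exists_moreauEnvelope_eq (τ := τ) hK hK₀ hφ x
  rw [← hyx]
  have hq : 0 ≤ sumSq (y - x) / (2 * τ) := div_nonneg (sumSq_nonneg _) (by positivity)
  by_cases hyρ : dist y x < ρ
  · linarith [hφx y hy hyρ]
  · -- a far-away `y` costs at least `ρ ^ 2 / (2 * τ) ≥ 2 * M`
    have hfar : ρ ^ 2 ≤ sumSq (y - x) := by
      rw [not_lt, dist_eq_norm] at hyρ
      exact (pow_le_pow_left₀ hρ hyρ 2).trans (sq_norm_le_sumSq _)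
    have h2M : 2 * M ≤ sumSq (y - x) / (2 * τ) := by
      rw [le_div_iff₀ (by positivity)]; linarith
    linarith [abs_le.1 (hM y hy), abs_le.1 (hM x hx)]

theorem exists_abs_moreauEnvelope_sub_le (hK : IsCompact K) (hK₀ : K.Nonempty)
    (hφ : ContinuousOn φ K) {η : ℝ} (hη : 0 < η) :
    ∃ τ > 0, ∀ x ∈ K, |moreauEnvelope K φ τ x - φ x| ≤ η := by
  obtain ⟨C, hC⟩ := hK.exists_bound_of_continuousOn hφ
  obtain ⟨ρ, hρ, hφρ⟩ := Metric.uniformContinuousOn_iff.1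
    (hK.uniformContinuousOn_of_continuous hφ) η hη
  have hM : ∀ y ∈ K, |φ y| ≤ |C| := fun y hy => (hC y hy).trans (le_abs_self C)
  set τ := ρ ^ 2 / (4 * (|C| + 1))
  have hτρ : 4 * |C| * τ ≤ ρ ^ 2 := by
    rw [show 4 * |C| * τ = ρ ^ 2 * (|C| / (|C| + 1)) by simp only [τ]; field_simp]
    exact mul_le_of_le_one_right (sq_nonneg ρ) ((div_le_one (by positivity)).2 (by linarith))
  refine ⟨τ, by positivity, fun x hx => abs_le.2 ⟨?_, ?_⟩⟩
  · linarith [sub_le_moreauEnvelope hK hK₀ hφ hM hρ.le hη.le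
      (fun y hy hyx => by linarith [abs_lt.1 (hφρ y hy x hx hyx)]) (by positivity) hτρ hx]
  · linarith [moreauEnvelope_le_self (τ := τ) hK hφ hx]

theorem convexOn_moreauEnvelope (hK : IsCompact K) (hK₀ : K.Nonempty) (hφ : ContinuousOn φ K)
    (hconv : ConvexOn ℝ K φ) (hτ : 0 < τ) : ConvexOn ℝ univ (moreauEnvelope K φ τ) := by
  refine ⟨convex_univ, fun x₁ _ x₂ _ a b ha hb hab => ?_⟩
  obtain ⟨y₁, hy₁, h₁⟩ := exists_moreauEnvelope_eq (τ := τ) hK hK₀ hφ x₁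
  obtain ⟨y₂, hy₂, h₂⟩ := exists_moreauEnvelope_eq (τ := τ) hK hK₀ hφ x₂
  have hφy := hconv.2 hy₁ hy₂ ha hb hab
  have hq := sumSq_combo_le ha hb hab (y₁ - x₁) (y₂ - x₂)
  rw [show a • (y₁ - x₁) + b • (y₂ - x₂) = a • y₁ + b • y₂ - (a • x₁ + b • x₂) by module] at hq
  calc moreauEnvelope K φ τ (a • x₁ + b • x₂)
      ≤ φ (a • y₁ + b • y₂) + sumSq (a • y₁ + b • y₂ - (a • x₁ + b • x₂)) / (2 * τ) :=
        moreauEnvelope_le hK hφ (hconv.1 hy₁ hy₂ ha hb hab) _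
    _ ≤ a * φ y₁ + b * φ y₂ + (a * sumSq (y₁ - x₁) + b * sumSq (y₂ - x₂)) / (2 * τ) := by
        gcongr; simpa only [smul_eq_mul] using hφy
    _ = a • moreauEnvelope K φ τ x₁ + b • moreauEnvelope K φ τ x₂ := by
        rw [← h₁, ← h₂, smul_eq_mul, smul_eq_mul]; ring

theorem secondDiff_moreauEnvelope_le (hK : IsCompact K) (hK₀ : K.Nonempty)
    (hφ : ContinuousOn φ K) (hτ : 0 < τ) (x u : ι → ℝ) :
    secondDiff (moreauEnvelope K φ τ) x u ≤ sumSq u / τ := by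
  obtain ⟨y, hy, hyx⟩ := exists_moreauEnvelope_eq (τ := τ) hK hK₀ hφ x
  -- a minimiser `y` for `x` is a competitor at both `x + u` and `x - u`
  have h_add := moreauEnvelope_le (τ := τ) hK hφ hy (x + u)
  have h_sub := moreauEnvelope_le (τ := τ) hK hφ hy (x - u)
  have hpar := sumSq_add_add_sumSq_sub (y - x) u
  rw [show y - (x + u) = y - x - u by abel] at h_add
  rw [show y - (x - u) = y - x + u by abel] at h_sub
  have hsplit : sumSq (y - x - u) / (2 * τ) + sumSq (y - x + u) / (2 * τ) =
      2 * (sumSq (y - x) / (2 * τ)) + sumSq u / τ := by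
    field_simp; linarith
  unfold secondDiff
  linarith

end MoreauEnvelope

section Cube

variable {d : ℕ}

noncomputable def cubeCenter (d : ℕ) : Fin d → ℝ := fun _ => 1 / 2

theorem Icc_eq_closedBall_cubeCenter :
    Icc (0 : Fin d → ℝ) 1 = closedBall (cubeCenter d) (1 / 2) := by
  ext x
  simp only [mem_Icc, Pi.le_def, mem_closedBall, dist_pi_le_iff (by norm_num : (0 : ℝ) ≤ 1 / 2),
    Real.dist_eq, abs_le, cubeCenter, Pi.zero_apply, Pi.one_apply, ← forall_and]
  exact forall_congr' fun i => ⟨fun h => ⟨by linarith, by linarith⟩,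
    fun h => ⟨by linarith, by linarith⟩⟩

theorem setOf_forall_mem_Ioo_eq_ball :
    {x : Fin d → ℝ | ∀ i, x i ∈ Ioo (0 : ℝ) 1} = ball (cubeCenter d) (1 / 2) := by
  ext x
  simp only [mem_ofPred_eq, mem_Ioo, mem_ball, dist_pi_lt_iff (by norm_num : (0 : ℝ) < 1 / 2),
    Real.dist_eq, abs_lt, cubeCenter]
  exact forall_congr' fun i => ⟨fun h => ⟨by linarith, by linarith⟩,
    fun h => ⟨by linarith, by linarith⟩⟩

theorem interior_Icc_eq_ball_cubeCenter :
    interior (Icc (0 : Fin d → ℝ) 1) = ball (cubeCenter d) (1 / 2) := by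
  rw [Icc_eq_closedBall_cubeCenter, interior_closedBall _ (by norm_num)]

noncomputable def innerCube (d n : ℕ) : Set (Fin d → ℝ) :=
  closedBall (cubeCenter d) (1 / 2 - 1 / (n + 1))

theorem innerCube_subset_ball (d n : ℕ) : innerCube d n ⊆ ball (cubeCenter d) (1 / 2) :=
  closedBall_subset_ball (by linarith [Nat.one_div_pos_of_nat (α := ℝ) (n := n)])

theorem closedBall_subset_Icc_of_mem_innerCube {n : ℕ} {x : Fin d → ℝ} (hx : x ∈ innerCube d n)
    {r : ℝ} (hr : r ≤ 1 / (n + 1)) : closedBall x r ⊆ Icc 0 1 := by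
  rw [Icc_eq_closedBall_cubeCenter]
  refine (closedBall_subset_closedBall' ?_)
  rw [innerCube, mem_closedBall] at hx
  linarith

theorem exists_innerCube_mem_nhds {x : Fin d → ℝ} (hx : x ∈ ball (cubeCenter d) (1 / 2))
    {ε : ℝ} (hε : 0 < ε) : ∃ n : ℕ, 1 / ((n : ℝ) + 1) < ε ∧ innerCube d n ∈ 𝓝 x := by
  set m := (1 / 2 - dist x (cubeCenter d)) / 2 with hm_def
  have hm : 0 < m := by linarith [mem_ball.1 hx]
  obtain ⟨n, hn⟩ := exists_nat_one_div_lt (lt_min hε hm)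
  refine ⟨n, hn.trans_le (min_le_left _ _), mem_of_superset (ball_mem_nhds x hm) fun y hy => ?_⟩
  rw [innerCube, mem_closedBall]
  linarith [dist_triangle y x (cubeCenter d), mem_ball.1 hy, min_le_right ε m]

theorem isCompact_innerCube (d n : ℕ) : IsCompact (innerCube d n) := isCompact_closedBall _ _

noncomputable def projCube (d : ℕ) : C(Fin d → ℝ, Icc (0 : Fin d → ℝ) 1) where
  toFun x := ⟨fun i => projIcc 0 1 zero_le_one (x i),
    fun i => (projIcc 0 1 zero_le_one (x i)).2.1, fun i => (projIcc 0 1 zero_le_one (x i)).2.2⟩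
  continuous_toFun := by fun_prop

theorem projCube_of_mem {x : Fin d → ℝ} (hx : x ∈ Icc 0 1) : projCube d x = ⟨x, hx⟩ :=
  Subtype.ext <| funext fun i => by
    simp [projCube, projIcc_of_mem zero_le_one ⟨hx.1 i, hx.2 i⟩]

noncomputable def cubeExtend (f : C(Icc (0 : Fin d → ℝ) 1, ℝ)) : C(Fin d → ℝ, ℝ) :=
  f.comp (projCube d)

theorem cubeExtend_of_mem (f : C(Icc (0 : Fin d → ℝ) 1, ℝ)) {x : Fin d → ℝ}
    (hx : x ∈ Icc 0 1) : cubeExtend f x = f ⟨x, hx⟩ := by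
  rw [cubeExtend, ContinuousMap.comp_apply, projCube_of_mem hx]

theorem isConvexMapOnCube_iff {f : C(Icc (0 : Fin d → ℝ) 1, ℝ)} {φ : (Fin d → ℝ) → ℝ}
    (hφ : ∀ x : Icc (0 : Fin d → ℝ) 1, φ x = f x) :
    IsConvexMapOnCube f ↔ ConvexOn ℝ (Icc 0 1) φ := by
  refine ⟨fun hf => ⟨convex_Icc 0 1, fun x hx y hy a b ha hb hab => ?_⟩,
    fun hφc x y z a b ha hb hab hz => ?_⟩
  · have := hf ⟨x, hx⟩ ⟨y, hy⟩ ⟨a • x + b • y, convex_Icc 0 1 hx hy ha hb hab⟩ a b ha hb hab rfl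
    simpa only [← hφ, smul_eq_mul] using this
  · simpa only [← hφ, hz, smul_eq_mul] using hφc.2 x.2 y.2 ha hb hab

theorem convexOn_cubeExtend (f : CCSpace d) : ConvexOn ℝ (Icc 0 1) (cubeExtend f.1) :=
  (isConvexMapOnCube_iff fun x => cubeExtend_of_mem f.1 x.2).1 f.2

end Cube

section GenericSet

variable {d : ℕ}

def smallSecondDiffSet (d n : ℕ) : Set (CCSpace d) :=
  {f | ∃ δ : ℝ, 0 < δ ∧ δ ≤ 1 / (n + 1) ∧ ∀ x ∈ innerCube d n,
    ∀ u ∈ closedBall (0 : Fin d → ℝ) δ, secondDiff (cubeExtend f.1) x u < δ / (n + 1)}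

theorem continuous_cubeExtend_apply :
    Continuous fun q : CCSpace d × (Fin d → ℝ) => cubeExtend q.1.1 q.2 :=
  continuous_eval.comp ((continuous_subtype_val.comp continuous_fst).prodMk
    ((projCube d).continuous.comp continuous_snd))

theorem isOpen_smallSecondDiffSet (d n : ℕ) : IsOpen (smallSecondDiffSet d n) := by
  have : smallSecondDiffSet d n = ⋃ δ ∈ Ioc (0 : ℝ) (1 / (n + 1)), {f : CCSpace d |
      ∀ p ∈ innerCube d n ×ˢ closedBall 0 δ,
        secondDiff (cubeExtend f.1) p.1 p.2 < δ / (n + 1)} := by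
    ext f
    simp only [smallSecondDiffSet, mem_iUnion, mem_Ioc, exists_prop, forall_prod_set,
      mem_ofPred_eq, and_assoc]
  rw [this]
  refine isOpen_biUnion fun δ _ =>
    ((isCompact_innerCube d n).prod (isCompact_closedBall 0 δ)).isOpen_setOf_forall_lt ?_ _
  have h := continuous_cubeExtend_apply (d := d)
  exact ((h.comp (continuous_fst.prodMk (continuous_snd.fst.add continuous_snd.snd))).add
    (h.comp (continuous_fst.prodMk (continuous_snd.fst.sub continuous_snd.snd)))).sub
    (continuous_const.mul (h.comp (continuous_fst.prodMk continuous_snd.fst)))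

theorem exists_dist_lt_secondDiff_le (f : CCSpace d) {r : ℝ} (hr : 0 < r) :
    ∃ τ > 0, ∃ g : CCSpace d, dist g f < r ∧ ∀ x u : Fin d → ℝ, x ∈ Icc 0 1 →
      x + u ∈ Icc 0 1 → x - u ∈ Icc 0 1 → secondDiff (cubeExtend g.1) x u ≤ sumSq u / τ := by
  set φ := cubeExtend f.1
  have hK : IsCompact (Icc (0 : Fin d → ℝ) 1) := isCompact_Icc
  have hK₀ : (Icc (0 : Fin d → ℝ) 1).Nonempty := nonempty_Icc.2 zero_le_one
  have hφ : ContinuousOn φ (Icc 0 1) := φ.continuous.continuousOn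
  obtain ⟨τ, hτ, hclose⟩ := exists_abs_moreauEnvelope_sub_le hK hK₀ hφ (half_pos hr)
  set ψ := moreauEnvelope (Icc 0 1) φ τ
  have hψ_conv : ConvexOn ℝ univ ψ :=
    convexOn_moreauEnvelope hK hK₀ hφ (convexOn_cubeExtend f) hτ
  have hψ_cont : Continuous ψ := continuousOn_univ.1 (hψ_conv.continuousOn isOpen_univ)
  let g : CCSpace d := ⟨⟨fun x => ψ x, hψ_cont.comp continuous_subtype_val⟩,
    (isConvexMapOnCube_iff fun _ => rfl).2 (hψ_conv.subset (subset_univ _) (convex_Icc 0 1))⟩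
  refine ⟨τ, hτ, g, ?_, fun x u hx hxu hxu' => ?_⟩
  · rw [Subtype.dist_eq]
    refine ((ContinuousMap.dist_le (half_pos hr).le).2 fun x => ?_).trans_lt (half_lt_self hr)
    rw [Real.dist_eq, ← cubeExtend_of_mem f.1 x.2]
    exact hclose x x.2
  · have : secondDiff (cubeExtend g.1) x u = secondDiff ψ x u := by
      simp only [secondDiff, cubeExtend_of_mem _ hx, cubeExtend_of_mem _ hxu,
        cubeExtend_of_mem _ hxu']
      rfl
    rw [this]
    exact secondDiff_moreauEnvelope_le hK hK₀ hφ hτ x u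

theorem dense_smallSecondDiffSet (d n : ℕ) : Dense (smallSecondDiffSet d n) := by
  refine Metric.dense_iff.2 fun f r hr => ?_
  obtain ⟨τ, hτ, g, hgf, hg⟩ := exists_dist_lt_secondDiff_le f hr
  set δ := min (1 / ((n : ℝ) + 1)) (τ / ((n + 1) * (d + 1)))
  have hδ : 0 < δ := by positivity
  have hδτ : δ * ((n + 1) * (d + 1)) ≤ τ := (le_div_iff₀ (by positivity)).1 (min_le_right _ _)
  refine ⟨g, mem_ball.2 hgf, δ, hδ, min_le_left _ _, fun x hx u hu => ?_⟩
  rw [mem_closedBall_zero_iff] at hu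
  have hball := closedBall_subset_Icc_of_mem_innerCube hx (min_le_left _ _ : δ ≤ _)
  calc secondDiff (cubeExtend g.1) x u
      ≤ sumSq u / τ := hg x u (hball (mem_closedBall_self hδ.le))
        (hball (by rwa [mem_closedBall, dist_self_add_left]))
        (hball (by rwa [mem_closedBall, dist_self_sub_left]))
    _ ≤ d * δ ^ 2 / τ := by
        gcongr
        exact (sumSq_le_card_mul_sq_norm u).trans (by rw [Fintype.card_fin]; gcongr)
    _ < δ / (n + 1) := by
        rw [div_lt_div_iff₀ hτ (by positivity)]
        nlinarith

theorem contDiffOn_cubeExtend_of_forall_mem {f : CCSpace d}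
    (hf : ∀ n, f ∈ smallSecondDiffSet d n) :
    ContDiffOn ℝ 1 (cubeExtend f.1) (ball (cubeCenter d) (1 / 2)) := by
  set φ := cubeExtend f.1
  have hsub : ∀ y, ∃ p : (Fin d → ℝ) →L[ℝ] ℝ,
      y ∈ ball (cubeCenter d) (1 / 2) → ∀ z ∈ Icc 0 1, φ y + p (z - y) ≤ φ z := fun y => by
    by_cases hy : y ∈ ball (cubeCenter d) (1 / 2)
    · obtain ⟨p, hp⟩ := (convexOn_cubeExtend f).exists_subgradient φ.continuous.continuousOn
        (by rwa [interior_Icc_eq_ball_cubeCenter])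
      exact ⟨p, fun _ => hp⟩
    · exact ⟨0, fun h => absurd h hy⟩
  choose D hD using hsub
  refine contDiffOn_one_of_isLittleO_prod (D := D) isOpen_ball fun x hx =>
    isLittleO_iff.2 fun ε hε => ?_
  obtain ⟨n, hnε, hxn⟩ := exists_innerCube_mem_nhds hx hε
  obtain ⟨δ, hδ, hδn, hsd⟩ := hf n
  rw [nhds_prod_eq]
  filter_upwards [prod_mem_prod hxn (closedBall_mem_nhds 0 hδ)] with ⟨y, h⟩ ⟨hy, hh⟩
  rw [mem_closedBall_zero_iff] at hh
  have hbound := (convexOn_cubeExtend f).abs_sub_sub_le_of_secondDiff_le (p := (D y).toLinearMap)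
    (hD y (innerCube_subset_ball d n hy)) hδ (closedBall_subset_Icc_of_mem_innerCube hy hδn)
    (fun u hu => (hsd y hy u (mem_closedBall_zero_iff.2 hu)).le) hh
  rw [div_div_cancel_left' hδ.ne'] at hbound
  exact hbound.trans (by gcongr; simpa using hnε.le)

end GenericSet

theorem isClosed_setOf_isConvexMapOnCube (d : ℕ) :
    IsClosed {f : C(Icc (0 : Fin d → ℝ) 1, ℝ) | IsConvexMapOnCube f} := by
  simp only [IsConvexMapOnCube, ofPred_forall]
  repeat refine isClosed_iInter fun _ => ?_
  exact isClosed_le (by fun_prop) (by fun_prop)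

instance (d : ℕ) : CompleteSpace (CCSpace d) :=
  (isClosed_setOf_isConvexMapOnCube d).completeSpace_coe

theorem generic_convex_continuously_differentiable (d : ℕ) :
    ∃ G : Set (CCSpace d), Dense G ∧ IsGδ G ∧
      ∀ f ∈ G, ∀ F : (Fin d → ℝ) → ℝ,
        (∀ x : Set.Icc (0 : Fin d → ℝ) 1, F x = f.1 x) →
        ContDiffOn ℝ 1 F {x : Fin d → ℝ | ∀ i, x i ∈ Set.Ioo (0:ℝ) 1} := by
  refine ⟨⋂ n, smallSecondDiffSet d n,
    dense_iInter_of_isOpen (isOpen_smallSecondDiffSet d) (dense_smallSecondDiffSet d),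
    .iInter fun n => (isOpen_smallSecondDiffSet d n).isGδ, fun f hf F hF => ?_⟩
  rw [setOf_forall_mem_Ioo_eq_ball]
  refine (contDiffOn_cubeExtend_of_forall_mem (mem_iInter.1 hf)).congr fun x hx => ?_
  have hx' : x ∈ Icc 0 1 := interior_subset (by rwa [interior_Icc_eq_ball_cubeCenter])
  rw [hF ⟨x, hx'⟩, cubeExtend_of_mem f.1 hx']
end

section
/- There is a dense G_δ set in the space CC of continuous convex functions on [0,1]^d such that every f in this set satisfies: for every j ∈ {1,…,d} and every choice of the other coordinates in [0,1], ∂_{j,+}f = −∞ at points with x_j = 0 and ∂_{j,−}f = +∞ at points with x_j = 1; consequently h_f(x) = 0 at every such boundary point. -/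
open Filter Set
open scoped ENNReal NNReal

/-- The pointwise Hölder exponent of `f : ℝ^d → ℝ` at `x`, computed within the set `s`:
the supremum of all `h ≥ 0` such that there exist a polynomial `P` of (total) degree
strictly less than `h` and a constant `C > 0` with
`|f y - P (y - x)| ≤ C * ‖y - x‖ ^ h` for `y` near `x` (within `s`). -/
noncomputable def mHolderExpOn {d : ℕ} (f : (Fin d → ℝ) → ℝ) (s : Set (Fin d → ℝ))
    (x : Fin d → ℝ) : ℝ≥0∞ :=
  ⨆ (h : ℝ≥0) (_ : ∃ P : MvPolynomial (Fin d) ℝ, (P.totalDegree : ℝ) < (h : ℝ) ∧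
      ∃ C > (0:ℝ), ∀ᶠ y in nhdsWithin x s,
        |f y - MvPolynomial.eval (fun i => y i - x i) P| ≤ C * ‖y - x‖ ^ (h : ℝ)),
    (h : ℝ≥0∞)


/-!
For a direction `j`, a face `x_j = b` (`b ∈ {0, 1}`) and `n, m ∈ ℕ`, consider the convex functions
that, uniformly along the face, drop by more than `(n + 1) t ^ (1 / (m + 1))` when moving inward a
distance `t < 1 / (n + 1)`. This set is open because the face is compact, and dense: adding
`-ε (distance to the face) ^ p` with `p < 1 / (m + 1)` keeps a function convex and creates such a
drop, since a convex function increases at most linearly inward. By Baire's theorem in the complete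
space `CC`, the intersection `G` over all `j, b, n, m` is a dense `G_δ`.

For `f ∈ G`, the case `m = 0` and the monotonicity of difference quotients of convex functions give
the infinite one-sided derivatives. Letting `m → ∞` rules out every bound
`f y - f x = O(‖y - x‖ ^ β)` with `β > 0`, whereas a positive Hölder exponent would provide one,
a polynomial being Lipschitz near `x`.
-/

open Function Asymptotics Topology

lemma isOpen_setOf_forall_sub_lt {X Y : Type*} [TopologicalSpace X] [TopologicalSpace Y]
    {K : Set X} (hK : IsCompact K) (a b : C(X, Y)) (c : ℝ) :
    IsOpen {f : C(Y, ℝ) | ∀ x ∈ K, f (a x) - f (b x) < c} :=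
  (ContinuousMap.isOpen_setOfPred_mapsTo hK isOpen_Iio).preimage
    ((ContinuousMap.continuous_precomp a).sub (ContinuousMap.continuous_precomp b))

lemma isBigO_norm_sub_rpow_of_le {E : Type*} [SeminormedAddCommGroup E] (x : E) {α β : ℝ}
    (hβ : 0 ≤ β) (hβα : β ≤ α) :
    (fun y => ‖y - x‖ ^ α) =O[𝓝 x] fun y => ‖y - x‖ ^ β := by
  refine IsBigO.of_bound 1 ?_
  filter_upwards [Metric.ball_mem_nhds x one_pos] with y hy
  rw [one_mul, Real.norm_of_nonneg (by positivity), Real.norm_of_nonneg (by positivity)]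
  exact Real.rpow_le_rpow_of_exponent_ge' (norm_nonneg _) (mem_ball_iff_norm.1 hy).le hβ hβα

lemma mHolderExpOn_eq_zero_of_forall_not_isBigO {d : ℕ} {F : (Fin d → ℝ) → ℝ}
    {s : Set (Fin d → ℝ)} {x : Fin d → ℝ} (hx : x ∈ s)
    (hF : ∀ β : ℝ, 0 < β → ¬ (fun y => F y - F x) =O[𝓝[s] x] fun y => ‖y - x‖ ^ β) :
    mHolderExpOn F s x = 0 := by
  refine ENNReal.iSup_eq_zero.2 fun h => ENNReal.iSup_eq_zero.2 fun ⟨P, _, C, hC, hP⟩ => ?_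
  by_contra hh
  have h0 : (0 : ℝ) < h := NNReal.coe_pos.2 (pos_iff_ne_zero.2 (by simpa using hh))
  set β := min (h : ℝ) 1
  apply hF β (lt_min h0 one_pos)
  have hPx : F x = MvPolynomial.eval 0 P := by
    have := hP.self_of_nhdsWithin hx
    simp_rw [sub_self, norm_zero, Real.zero_rpow h0.ne', mul_zero, abs_nonpos_iff] at this
    exact sub_eq_zero.1 this
  have hrem : (fun y => F y - MvPolynomial.eval (fun i => y i - x i) P) =O[𝓝[s] x]
      fun y => ‖y - x‖ ^ (h : ℝ) :=
    IsBigO.of_bound C <| hP.mono fun y hy => by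
      rwa [Real.norm_eq_abs, Real.norm_of_nonneg (by positivity)]
  have hpoly : (fun y => MvPolynomial.eval (fun i => y i - x i) P - MvPolynomial.eval 0 P)
      =O[𝓝 x] fun y => ‖y - x‖ ^ (1 : ℝ) := by
    have hP0 := (AnalyticOnNhd.eval_mvPolynomial P 0 trivial).differentiableAt.isBigO_sub
    have := (hP0.comp_tendsto (tendsto_sub_nhds_zero_iff.2 (tendsto_id (x := 𝓝 x)))).norm_right
    simp only [Function.comp_def, id, sub_zero, Real.rpow_one] at this ⊢
    exact this
  -- `F y - F x = (F y - P (y - x)) + (P (y - x) - P 0)`, with `F x = P 0`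
  refine ((hrem.trans ((isBigO_norm_sub_rpow_of_le x (by positivity) (min_le_left _ _)).mono
    nhdsWithin_le_nhds)).add ((hpoly.trans (isBigO_norm_sub_rpow_of_le x (by positivity)
    (min_le_right _ _))).mono nhdsWithin_le_nhds)).congr_left fun y => ?_
  rw [hPx]
  ring

lemma eventually_mul_rpow_add_mul_lt_mul_rpow {K A ε p β : ℝ} (hA : 0 ≤ A) (hε : 0 < ε)
    (hpβ : p < β) (hβ : β ≤ 1) :
    ∀ᶠ t in 𝓝[>] 0, K * t ^ β + A * t < ε * t ^ p := by
  have hlim : Tendsto (fun t : ℝ => (K + A) * t ^ (β - p)) (𝓝[>] 0) (𝓝 0) := by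
    have := ((Real.continuous_rpow_const (sub_nonneg.2 hpβ.le)).tendsto 0).const_mul (K + A)
    simpa [Real.zero_rpow (sub_pos.2 hpβ).ne'] using this.mono_left nhdsWithin_le_nhds
  filter_upwards [hlim.eventually (gt_mem_nhds hε), Ioo_mem_nhdsGT one_pos] with t ht ht01
  have htβ : t ≤ t ^ β := by
    simpa using Real.rpow_le_rpow_of_exponent_ge ht01.1 ht01.2.le hβ
  calc K * t ^ β + A * t ≤ (K + A) * t ^ β := by linarith [mul_le_mul_of_nonneg_left htβ hA]
    _ = (K + A) * t ^ (β - p) * t ^ p := by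
      rw [mul_assoc, ← Real.rpow_add ht01.1, sub_add_cancel]
    _ < ε * t ^ p := mul_lt_mul_of_pos_right ht (Real.rpow_pos_of_pos ht01.1 p)

lemma one_div_nat_add_one_le_one (n : ℕ) : 1 / ((n : ℝ) + 1) ≤ 1 :=
  (Nat.one_div_le_one_div n.zero_le).trans (by simp)

namespace ConvexCube

abbrev cube (d : ℕ) : Set (Fin d → ℝ) := Icc 0 1

variable {d : ℕ}

lemma isClosed_setOf_isConvexMapOnCube :
    IsClosed {f : C(cube d, ℝ) | IsConvexMapOnCube f} := by
  simp only [IsConvexMapOnCube, ofPred_forall]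
  repeat refine isClosed_iInter fun _ => ?_
  exact isClosed_le (by fun_prop) (by fun_prop)

instance : CompleteSpace (CCSpace d) :=
  IsClosed.completeSpace_coe (hs := isClosed_setOf_isConvexMapOnCube)

lemma _root_.IsConvexMapOnCube.add {f g : C(cube d, ℝ)} (hf : IsConvexMapOnCube f)
    (hg : IsConvexMapOnCube g) : IsConvexMapOnCube (f + g) := by
  intro x y z s t hs ht hst hz
  simp only [ContinuousMap.add_apply]
  linarith [hf x y z s t hs ht hst hz, hg x y z s t hs ht hst hz]

lemma _root_.IsConvexMapOnCube.const_smul {f : C(cube d, ℝ)} (hf : IsConvexMapOnCube f)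
    {c : ℝ} (hc : 0 ≤ c) : IsConvexMapOnCube (c • f) := by
  intro x y z s t hs ht hst hz
  simp only [ContinuousMap.smul_apply, smul_eq_mul]
  nlinarith [mul_le_mul_of_nonneg_left (hf x y z s t hs ht hst hz) hc]

lemma isConvexMapOnCube_of_convexOn {g : C(cube d, ℝ)} {φ : ℝ → ℝ} {j : Fin d}
    (hφ : ConvexOn ℝ (Icc 0 1) φ) (hg : ∀ x, g x = φ ((x : Fin d → ℝ) j)) :
    IsConvexMapOnCube g := by
  intro x y z s t hs ht hst hz
  simp only [hg, hz, Pi.add_apply, Pi.smul_apply, smul_eq_mul]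
  exact hφ.2 ⟨x.2.1 j, x.2.2 j⟩ ⟨y.2.1 j, y.2.2 j⟩ hs ht hst

lemma update_mem_cube {x : Fin d → ℝ} (hx : x ∈ cube d) (j : Fin d) {u : ℝ}
    (hu : u ∈ Icc (0 : ℝ) 1) : update x j u ∈ cube d := by
  refine ⟨fun i => ?_, fun i => ?_⟩ <;> rcases eq_or_ne i j with rfl | hij
  · simpa using hu.1
  · simpa [update_of_ne hij] using hx.1 i
  · simpa using hu.2
  · simpa [update_of_ne hij] using hx.2 i

noncomputable def cubeUpdate (x : cube d) (j : Fin d) (u : ℝ) : cube d :=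
  ⟨update x j (projIcc 0 1 zero_le_one u), update_mem_cube x.2 j (projIcc 0 1 _ u).2⟩

lemma coe_cubeUpdate (x : cube d) (j : Fin d) {u : ℝ} (hu : u ∈ Icc (0 : ℝ) 1) :
    (cubeUpdate x j u : Fin d → ℝ) = update x j u := by
  simp [cubeUpdate, projIcc_of_mem _ hu]

lemma cubeUpdate_apply_self (x : cube d) (j : Fin d) : cubeUpdate x j ((x : Fin d → ℝ) j) = x :=
  Subtype.ext <| by rw [coe_cubeUpdate x j ⟨x.2.1 j, x.2.2 j⟩, update_eq_self]

lemma continuous_cubeUpdate (j : Fin d) (u : ℝ) :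
    Continuous fun x : cube d => cubeUpdate x j u := by
  unfold cubeUpdate
  fun_prop

lemma norm_coe_cubeUpdate_sub_le (x : cube d) (j : Fin d) {u : ℝ} (hu : u ∈ Icc (0 : ℝ) 1) :
    ‖(cubeUpdate x j u : Fin d → ℝ) - x‖ ≤ |u - (x : Fin d → ℝ) j| := by
  rw [coe_cubeUpdate x j hu, pi_norm_le_iff_of_nonneg (abs_nonneg _)]
  intro i
  rcases eq_or_ne i j with rfl | hij <;> simp [update_of_ne, *]

lemma _root_.IsConvexMapOnCube.convexOn_cubeUpdate {f : C(cube d, ℝ)} (hf : IsConvexMapOnCube f)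
    (x : cube d) (j : Fin d) : ConvexOn ℝ (Icc 0 1) fun u => f (cubeUpdate x j u) := by
  refine ⟨convex_Icc 0 1, fun u hu v hv a c ha hc hac => ?_⟩
  refine hf _ _ _ a c ha hc hac ?_
  rw [coe_cubeUpdate x j hu, coe_cubeUpdate x j hv,
    coe_cubeUpdate x j (convex_Icc (0 : ℝ) 1 hu hv ha hc hac)]
  ext i
  rcases eq_or_ne i j with rfl | hij
  · simp
  · simp [update_of_ne hij, ← add_mul, hac]

/-- The faces `x_j = 0` and `x_j = 1` of the cube are indexed by `b = false` and `b = true`;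
`inwardCoord b t` is the `j`-th coordinate of the points at distance `t` from the face `b`. -/
def faceCoord (b : Bool) : ℝ := if b then 1 else 0

def inwardCoord (b : Bool) (t : ℝ) : ℝ := if b then 1 - t else t

@[simp]
lemma inwardCoord_false (t : ℝ) : inwardCoord false t = t :=
  rfl

@[simp]
lemma inwardCoord_true (t : ℝ) : inwardCoord true t = 1 - t :=
  rfl

lemma inwardCoord_zero (b : Bool) : inwardCoord b 0 = faceCoord b := by
  cases b <;> simp [faceCoord]

lemma inwardCoord_faceCoord (b : Bool) : inwardCoord b (faceCoord b) = 0 := by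
  cases b <;> simp [faceCoord]

lemma inwardCoord_inwardCoord (b : Bool) (t : ℝ) : inwardCoord b (inwardCoord b t) = t := by
  cases b <;> simp

lemma abs_inwardCoord_sub_faceCoord (b : Bool) (t : ℝ) :
    |inwardCoord b t - faceCoord b| = |t| := by
  cases b <;> simp [faceCoord, abs_neg]

lemma inwardCoord_mem {b : Bool} {t : ℝ} (ht : t ∈ Icc (0 : ℝ) 1) :
    inwardCoord b t ∈ Icc (0 : ℝ) 1 := by
  cases b
  · exact ht
  · exact ⟨sub_nonneg.2 ht.2, sub_le_self _ ht.1⟩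

lemma _root_.ConvexOn.comp_inwardCoord {g : ℝ → ℝ} (hg : ConvexOn ℝ (Icc 0 1) g) (b : Bool) :
    ConvexOn ℝ (Icc 0 1) (g ∘ inwardCoord b) := by
  refine ⟨convex_Icc 0 1, fun s hs t ht a c ha hc hac => ?_⟩
  have hcomb : inwardCoord b (a * s + c * t) = a * inwardCoord b s + c * inwardCoord b t := by
    cases b
    · simp [inwardCoord]
    · simp only [inwardCoord, if_true]
      linear_combination -hac
  simpa [hcomb] using hg.2 (inwardCoord_mem (b := b) hs) (inwardCoord_mem ht) ha hc hac

noncomputable def inwardDrop (f : C(cube d, ℝ)) (x : cube d) (j : Fin d) (b : Bool) (t : ℝ) : ℝ :=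
  f (cubeUpdate x j (inwardCoord b t)) - f x

lemma inwardDrop_add_smul (f g : C(cube d, ℝ)) (c : ℝ) (x : cube d) (j : Fin d) (b : Bool)
    (t : ℝ) : inwardDrop (f + c • g) x j b t = inwardDrop f x j b t + c * inwardDrop g x j b t := by
  simp only [inwardDrop, ContinuousMap.add_apply, ContinuousMap.smul_apply, smul_eq_mul]
  ring

section
variable {f : C(cube d, ℝ)} {x : cube d} {j : Fin d} {b : Bool}

lemma _root_.IsConvexMapOnCube.inwardDrop_div_le (hf : IsConvexMapOnCube f)
    (hx : (x : Fin d → ℝ) j = faceCoord b) {t t₀ : ℝ} (ht : 0 < t) (htt₀ : t ≤ t₀)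
    (ht₀ : t₀ ≤ 1) : inwardDrop f x j b t / t ≤ inwardDrop f x j b t₀ / t₀ := by
  have h0 : f (cubeUpdate x j (inwardCoord b 0)) = f x := by
    rw [inwardCoord_zero, ← hx, cubeUpdate_apply_self]
  have := ((hf.convexOn_cubeUpdate x j).comp_inwardCoord b).secant_mono (a := 0)
    ⟨le_rfl, zero_le_one⟩ ⟨ht.le, htt₀.trans ht₀⟩ ⟨ht.le.trans htt₀, ht₀⟩ ht.ne'
    (ht.trans_le htt₀).ne' htt₀
  simpa only [inwardDrop, Function.comp_apply, h0, sub_zero] using this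

lemma _root_.IsConvexMapOnCube.inwardDrop_le (hf : IsConvexMapOnCube f)
    (hx : (x : Fin d → ℝ) j = faceCoord b) {t : ℝ} (ht : 0 < t) (ht₁ : t ≤ 1) :
    inwardDrop f x j b t ≤ 2 * ‖f‖ * t := by
  have hslope := hf.inwardDrop_div_le hx ht ht₁ le_rfl
  have hbound : inwardDrop f x j b 1 ≤ 2 * ‖f‖ := by
    have h₁ := (abs_le.1 ((f.norm_coe_le_norm (cubeUpdate x j (inwardCoord b 1))))).2
    have h₂ := (abs_le.1 (f.norm_coe_le_norm x)).1
    rw [inwardDrop]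
    linarith
  rw [div_one, div_le_iff₀ ht] at hslope
  exact hslope.trans (mul_le_mul_of_nonneg_right hbound ht.le)

end

noncomputable def facePower (j : Fin d) (b : Bool) (p : ℝ≥0) : C(cube d, ℝ) where
  toFun x := -inwardCoord b ((x : Fin d → ℝ) j) ^ (p : ℝ)
  continuous_toFun := by
    have : Continuous (inwardCoord b) := by
      cases b
      · exact continuous_id
      · exact continuous_const.sub continuous_id
    exact ((Real.continuous_rpow_const p.2).comp
      (this.comp ((continuous_apply j).comp continuous_subtype_val))).neg

lemma facePower_apply (j : Fin d) (b : Bool) (p : ℝ≥0) (x : cube d) :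
    facePower j b p x = -inwardCoord b ((x : Fin d → ℝ) j) ^ (p : ℝ) :=
  rfl

lemma isConvexMapOnCube_facePower (j : Fin d) (b : Bool) {p : ℝ≥0} (hp : p ≤ 1) :
    IsConvexMapOnCube (facePower j b p) :=
  isConvexMapOnCube_of_convexOn
    (((Real.concaveOn_rpow p.2 hp).neg.subset Icc_subset_Ici_self
      (convex_Icc 0 1)).comp_inwardCoord b)
    (facePower_apply j b p)

lemma norm_facePower_le (j : Fin d) (b : Bool) (p : ℝ≥0) : ‖facePower j b p‖ ≤ 1 := by
  refine (ContinuousMap.norm_le _ zero_le_one).2 fun x => ?_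
  have hx := inwardCoord_mem (b := b) ⟨x.2.1 j, x.2.2 j⟩
  rw [facePower_apply, norm_neg, Real.norm_of_nonneg (Real.rpow_nonneg hx.1 _)]
  exact Real.rpow_le_one hx.1 hx.2 p.2

lemma inwardDrop_facePower {x : cube d} {j : Fin d} {b : Bool}
    (hx : (x : Fin d → ℝ) j = faceCoord b) {p : ℝ≥0} (hp : p ≠ 0) {t : ℝ}
    (ht : t ∈ Icc (0 : ℝ) 1) : inwardDrop (facePower j b p) x j b t = -t ^ (p : ℝ) := by
  simp [inwardDrop, facePower_apply, coe_cubeUpdate x j (inwardCoord_mem ht), hx,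
    inwardCoord_inwardCoord, inwardCoord_faceCoord, Real.zero_rpow (NNReal.coe_ne_zero.2 hp)]

def fastDropSet (d : ℕ) (j : Fin d) (b : Bool) (n m : ℕ) : Set (CCSpace d) :=
  {f | ∃ t ∈ Ioo (0 : ℝ) (1 / (n + 1)), ∀ x : cube d, (x : Fin d → ℝ) j = faceCoord b →
    inwardDrop f.1 x j b t < -(n + 1) * t ^ (1 / (m + 1 : ℝ))}

def genericSet (d : ℕ) : Set (CCSpace d) :=
  ⋂ q : Fin d × Bool × ℕ × ℕ, fastDropSet d q.1 q.2.1 q.2.2.1 q.2.2.2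

lemma isOpen_fastDropSet (j : Fin d) (b : Bool) (n m : ℕ) : IsOpen (fastDropSet d j b n m) := by
  have hface : IsCompact {x : cube d | (x : Fin d → ℝ) j = faceCoord b} :=
    (isClosed_eq ((continuous_apply j).comp continuous_subtype_val) continuous_const).isCompact
  have hopen (t : ℝ) : IsOpen {f : CCSpace d |
      ∀ x ∈ {x : cube d | (x : Fin d → ℝ) j = faceCoord b},
        inwardDrop f.1 x j b t < -(n + 1) * t ^ (1 / (m + 1 : ℝ))} :=
    (isOpen_setOf_forall_sub_lt hface ⟨_, continuous_cubeUpdate j (inwardCoord b t)⟩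
      (.id _) _).preimage continuous_subtype_val
  have : fastDropSet d j b n m = ⋃ t ∈ Ioo (0 : ℝ) (1 / (n + 1)), {f : CCSpace d |
      ∀ x ∈ {x : cube d | (x : Fin d → ℝ) j = faceCoord b},
        inwardDrop f.1 x j b t < -(n + 1) * t ^ (1 / (m + 1 : ℝ))} := by
    ext f
    simp [fastDropSet]
  rw [this]
  exact isOpen_biUnion fun t _ => hopen t

lemma dense_fastDropSet (j : Fin d) (b : Bool) (n m : ℕ) : Dense (fastDropSet d j b n m) := by
  rw [Metric.dense_iff]
  intro f r hr
  set p : ℝ≥0 := (m + 2)⁻¹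
  have hp0 : p ≠ 0 := by positivity
  have hp1 : p ≤ 1 := inv_le_one_of_one_le₀ (le_add_left one_le_two)
  have hpβ : (p : ℝ) < 1 / (m + 1) := by
    push_cast [p]
    rw [one_div]
    gcongr
    linarith
  let g : CCSpace d :=
    ⟨f.1 + (r / 2) • facePower j b p, f.2.add ((isConvexMapOnCube_facePower j b hp1).const_smul
      (by positivity))⟩
  have hgf : dist g f < r := by
    rw [Subtype.dist_eq, dist_eq_norm, add_sub_cancel_left, norm_smul, Real.norm_of_nonneg
      (by positivity)]
    linarith [mul_le_of_le_one_right (half_pos hr).le (norm_facePower_le (d := d) j b p)]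
  obtain ⟨t, hlt, ht, htn⟩ := ((eventually_mul_rpow_add_mul_lt_mul_rpow (K := n + 1)
    (by positivity : 0 ≤ 2 * ‖f.1‖) (half_pos hr) hpβ (one_div_nat_add_one_le_one m)).and
    (Ioo_mem_nhdsGT (lt_min one_pos (by positivity : (0 : ℝ) < 1 / (n + 1))))).exists
  refine ⟨g, Metric.mem_ball.2 hgf, t, ⟨ht, htn.trans_le (min_le_right _ _)⟩, fun x hx => ?_⟩
  have ht1 : t ≤ 1 := (htn.trans_le (min_le_left _ _)).le
  calc inwardDrop g.1 x j b t = inwardDrop f.1 x j b t - r / 2 * t ^ (p : ℝ) := by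
        rw [inwardDrop_add_smul, inwardDrop_facePower hx hp0 ⟨ht.le, ht1⟩]
        ring
    _ ≤ 2 * ‖f.1‖ * t - r / 2 * t ^ (p : ℝ) := by gcongr; exact f.2.inwardDrop_le hx ht ht1
    _ < -(n + 1) * t ^ (1 / (m + 1 : ℝ)) := by linarith

lemma dense_genericSet : Dense (genericSet d) :=
  dense_iInter_of_isOpen (fun _ => isOpen_fastDropSet _ _ _ _) fun _ => dense_fastDropSet _ _ _ _

lemma isGδ_genericSet : IsGδ (genericSet d) :=
  .iInter fun _ => (isOpen_fastDropSet _ _ _ _).isGδ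

section
variable {f : CCSpace d} {x : cube d} {j : Fin d} {b : Bool}

lemma tendsto_inwardDrop_div_atBot (hf : f ∈ genericSet d)
    (hx : (x : Fin d → ℝ) j = faceCoord b) :
    Tendsto (fun t => inwardDrop f.1 x j b t / t) (𝓝[>] 0) atBot := by
  refine tendsto_atBot.2 fun M => ?_
  obtain ⟨n, hn⟩ := exists_nat_gt (-M)
  obtain ⟨t₀, ⟨ht₀, ht₀n⟩, hdrop⟩ := mem_iInter.1 hf ⟨j, b, n, 0⟩
  have ht₀1 : t₀ ≤ 1 := ht₀n.le.trans (one_div_nat_add_one_le_one n)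
  filter_upwards [Ioc_mem_nhdsGT ht₀] with t ht
  calc inwardDrop f.1 x j b t / t ≤ inwardDrop f.1 x j b t₀ / t₀ :=
        f.2.inwardDrop_div_le hx ht.1 ht.2 ht₀1
    _ ≤ -(n + 1) := by
        rw [div_le_iff₀ ht₀]
        simpa using (hdrop x hx).le
    _ ≤ M := by linarith

lemma not_isBigO_of_mem_genericSet (hf : f ∈ genericSet d) {F : (Fin d → ℝ) → ℝ}
    (hF : ∀ y : cube d, F y = f.1 y) (hx : (x : Fin d → ℝ) j = faceCoord b) {β : ℝ} (hβ : 0 < β) :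
    ¬ (fun y => F y - F x) =O[𝓝[cube d] (x : Fin d → ℝ)] fun y => ‖y - x‖ ^ β := by
  intro hO
  obtain ⟨C, hC, hCO⟩ := hO.exists_pos
  obtain ⟨δ, hδ, hball⟩ := Metric.mem_nhdsWithin_iff.1 hCO.bound
  obtain ⟨m, hm⟩ := exists_nat_one_div_lt hβ
  obtain ⟨n, hn⟩ := exists_nat_gt (max C (1 / δ))
  obtain ⟨t, ⟨ht, htn⟩, hdrop⟩ := mem_iInter.1 hf ⟨j, b, n, m⟩
  have hnδ : 1 / (n + 1 : ℝ) < δ := by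
    rw [div_lt_iff₀ (by positivity)]
    rw [max_lt_iff, div_lt_iff₀ hδ] at hn
    linarith
  have ht1 : t ≤ 1 := htn.le.trans (one_div_nat_add_one_le_one n)
  set y := cubeUpdate x j (inwardCoord b t)
  have hyx : ‖(y : Fin d → ℝ) - x‖ ≤ t := by
    simpa [hx, abs_inwardCoord_sub_faceCoord, abs_of_pos ht] using
      norm_coe_cubeUpdate_sub_le x j (inwardCoord_mem (b := b) ⟨ht.le, ht1⟩)
  have hbound := hball ⟨mem_ball_iff_norm.2 (hyx.trans_lt (htn.trans hnδ)), y.2⟩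
  simp only [mem_ofPred_eq, hF, Real.norm_eq_abs, abs_of_nonneg (Real.rpow_nonneg
    (norm_nonneg _) _)] at hbound
  have hpow : ‖(y : Fin d → ℝ) - x‖ ^ β ≤ t ^ (1 / (m + 1 : ℝ)) :=
    (Real.rpow_le_rpow (norm_nonneg _) hyx hβ.le).trans
      (Real.rpow_le_rpow_of_exponent_ge ht ht1 hm.le)
  have hdrop := hdrop x hx
  rw [inwardDrop] at hdrop
  have hlt : (n + 1) * t ^ (1 / (m + 1 : ℝ)) < C * t ^ (1 / (m + 1 : ℝ)) :=
    calc (n + 1) * t ^ (1 / (m + 1 : ℝ)) < f.1 x - f.1 y := by linarith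
      _ ≤ C * ‖(y : Fin d → ℝ) - x‖ ^ β := by linarith [abs_le.1 hbound]
      _ ≤ C * t ^ (1 / (m + 1 : ℝ)) := mul_le_mul_of_nonneg_left hpow hC.le
  linarith [lt_of_mul_lt_mul_right hlt (Real.rpow_nonneg ht.le _), le_max_left C (1 / δ)]

lemma tendsto_slope_atBot_of_apply_eq_zero (hf : f ∈ genericSet d) {F : (Fin d → ℝ) → ℝ}
    (hF : ∀ y : cube d, F y = f.1 y) (hx : (x : Fin d → ℝ) j = 0) :
    Tendsto (fun t => (F (update (x : Fin d → ℝ) j t) - F x) / (t - (x : Fin d → ℝ) j))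
      (𝓝[>] ((x : Fin d → ℝ) j)) atBot := by
  rw [hx]
  refine (tendsto_inwardDrop_div_atBot hf (b := false) hx).congr' ?_
  filter_upwards [Ioc_mem_nhdsGT one_pos] with t ht
  have hmem : inwardCoord false t ∈ Icc (0 : ℝ) 1 := ⟨ht.1.le, ht.2⟩
  rw [inwardDrop, ← hF, ← hF, coe_cubeUpdate x j hmem, sub_zero, inwardCoord_false]

lemma tendsto_slope_atTop_of_apply_eq_one (hf : f ∈ genericSet d) {F : (Fin d → ℝ) → ℝ}
    (hF : ∀ y : cube d, F y = f.1 y) (hx : (x : Fin d → ℝ) j = 1) :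
    Tendsto (fun t => (F (update (x : Fin d → ℝ) j t) - F x) / (t - (x : Fin d → ℝ) j))
      (𝓝[<] ((x : Fin d → ℝ) j)) atTop := by
  rw [hx]
  have hflip : Tendsto (fun u : ℝ => 1 - u) (𝓝[<] 1) (𝓝[>] 0) := by
    refine tendsto_nhdsWithin_of_tendsto_nhds_of_eventually_within _ ?_
      (eventually_nhdsWithin_of_forall fun u hu => mem_Ioi.2 (sub_pos.2 hu))
    simpa using ((continuous_sub_left (1 : ℝ)).tendsto 1).mono_left nhdsWithin_le_nhds
  refine (tendsto_neg_atBot_atTop.comp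
    ((tendsto_inwardDrop_div_atBot hf (b := true) hx).comp hflip)).congr' ?_
  filter_upwards [Ico_mem_nhdsLT zero_lt_one] with u hu
  have hmem : inwardCoord true (1 - u) ∈ Icc (0 : ℝ) 1 := by
    rw [inwardCoord_true, sub_sub_cancel]
    exact ⟨hu.1, hu.2.le⟩
  simp only [Function.comp_apply, inwardDrop, ← hF, coe_cubeUpdate x j hmem]
  rw [inwardCoord_true, sub_sub_cancel, ← div_neg, neg_sub]

end

end ConvexCube

open ConvexCube

theorem generic_convex_infinite_boundary_derivatives (d : ℕ) :
    ∃ G : Set (CCSpace d), Dense G ∧ IsGδ G ∧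
      ∀ f ∈ G, ∀ F : (Fin d → ℝ) → ℝ,
        (∀ x : Set.Icc (0 : Fin d → ℝ) 1, F x = f.1 x) →
        ∀ j : Fin d, ∀ x ∈ Set.Icc (0 : Fin d → ℝ) 1,
          (x j = 0 →
            Filter.Tendsto (fun t => (F (Function.update x j t) - F x) / (t - x j))
              (nhdsWithin (x j) (Set.Ioi (x j))) Filter.atBot ∧
            mHolderExpOn F (Set.Icc (0 : Fin d → ℝ) 1) x = 0) ∧
          (x j = 1 →
            Filter.Tendsto (fun t => (F (Function.update x j t) - F x) / (t - x j))
              (nhdsWithin (x j) (Set.Iio (x j))) Filter.atTop ∧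
            mHolderExpOn F (Set.Icc (0 : Fin d → ℝ) 1) x = 0) := by
  refine ⟨genericSet d, dense_genericSet, isGδ_genericSet, fun f hf F hF j x hx => ?_⟩
  have holder (b : Bool) (hb : x j = faceCoord b) : mHolderExpOn F (Icc 0 1) x = 0 :=
    mHolderExpOn_eq_zero_of_forall_not_isBigO hx fun _ hβ =>
      not_isBigO_of_mem_genericSet hf (x := ⟨x, hx⟩) hF hb hβ
  refine ⟨fun h0 => ⟨?_, holder false h0⟩, fun h1 => ⟨?_, holder true h1⟩⟩
  · exact tendsto_slope_atBot_of_apply_eq_zero hf (x := ⟨x, hx⟩) hF h0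
  · exact tendsto_slope_atTop_of_apply_eq_one hf (x := ⟨x, hx⟩) hF h1
end

section
/- For every h ∈ [0,1] there exists a continuous convex function f : [0,1]^d → ℝ such that h_f(x) = h for every x on the face {x ∈ [0,1]^d : x₁ = 0}. (For example, in dimension d and h ∈ (0,1], f(x) = −x₁^h works after verification of convexity in x₁ and constancy in other variables; h_f = h on the face x₁ = 0.) -/
open Filter Set
open scoped ENNReal NNReal

open Asymptotics Topology

theorem MvPolynomial.isBigO_eval_single_sub {σ : Type*} [Fintype σ] [DecidableEq σ]
    (P : MvPolynomial σ ℝ) (i : σ) :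
    (fun t : ℝ => eval (Pi.single i t) P - eval (Pi.single i 0) P) =O[𝓝 0] fun t => t := by
  have hF := (AnalyticOnNhd.eval_mvPolynomial P 0 trivial).differentiableAt.hasFDerivAt
    |>.isBigO_sub.comp_tendsto
      ((continuous_single (A := fun _ : σ => ℝ) i).tendsto' 0 0 (Pi.single_zero i))
  refine (hF.trans (isBigO_of_le _ fun t => ?_)).congr_left fun t => ?_
  · simp [Pi.norm_single]
  · simp

section

variable {d : ℕ}

theorem tendsto_add_single_nhdsWithin_Icc (i : Fin d) {x : Fin d → ℝ}
    (hx : x ∈ Icc (0 : Fin d → ℝ) 1) (hxi : x i = 0) :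
    Tendsto (fun t : ℝ => x + Pi.single i t) (𝓝[>] 0) (𝓝[Icc 0 1] x) := by
  refine tendsto_nhdsWithin_iff.2 ⟨?_, ?_⟩
  · have hc : Continuous fun t : ℝ => x + Pi.single i t :=
      continuous_const.add (continuous_single (A := fun _ : Fin d => ℝ) i)
    simpa using (hc.tendsto 0).mono_left nhdsWithin_le_nhds
  · filter_upwards [Ioc_mem_nhdsGT (zero_lt_one' ℝ)] with t ht
    refine ⟨fun j => ?_, fun j => ?_⟩ <;> rcases eq_or_ne j i with rfl | hj
    all_goals have := hx.1 j; have := hx.2 j; simp_all [ht.1.le, ht.2]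

theorem ofReal_le_mHolderExpOn_of_isBigO {f : (Fin d → ℝ) → ℝ} {s : Set (Fin d → ℝ)}
    {x : Fin d → ℝ} {b : ℝ}
    (hf : ∀ p : ℝ, 0 < p → p < b → f =O[𝓝[s] x] fun y => ‖y - x‖ ^ p) :
    ENNReal.ofReal b ≤ mHolderExpOn f s x := by
  refine ENNReal.le_of_forall_nnreal_lt fun r hr => ?_
  rcases eq_or_ne r 0 with rfl | hr0
  · exact bot_le
  have hpos : 0 < (r : ℝ) := NNReal.coe_pos.2 (pos_iff_ne_zero.2 hr0)
  obtain ⟨C, hC, hCf⟩ := (hf r hpos (ENNReal.coe_lt_ofReal.1 hr)).exists_pos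
  refine le_iSup₂ (f := fun (p : ℝ≥0) _ => (p : ℝ≥0∞)) r ⟨0, by simpa using hpos, C, hC, ?_⟩
  filter_upwards [hCf.bound] with y hy
  simpa [abs_of_nonneg (Real.rpow_nonneg (norm_nonneg _) _)] using hy

theorem mHolderExpOn_le_of_isLittleO {f : (Fin d → ℝ) → ℝ} {s : Set (Fin d → ℝ)}
    {x : Fin d → ℝ} {i : Fin d} {b : ℝ}
    (hs : Tendsto (fun t : ℝ => x + Pi.single i t) (𝓝[>] 0) (𝓝[s] x))
    (hf : Tendsto (fun t => f (x + Pi.single i t)) (𝓝[>] 0) (𝓝 0))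
    (hlin : (fun t => t) =o[𝓝[>] 0] fun t => f (x + Pi.single i t))
    (hpow : ∀ p : ℝ, 0 < p → b < p →
      (fun t => t ^ p) =o[𝓝[>] 0] fun t => f (x + Pi.single i t)) :
    mHolderExpOn f s x ≤ ENNReal.ofReal b := by
  set G := fun t : ℝ => f (x + Pi.single i t)
  refine iSup₂_le fun p ⟨P, hdeg, C, _, hP⟩ => ?_
  rw [← ENNReal.ofReal_coe_nnreal]
  refine ENNReal.ofReal_le_ofReal (not_lt.1 fun hbp => ?_)
  have hp : 0 < (p : ℝ) := lt_of_le_of_lt (Nat.cast_nonneg _) hdeg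
  set q := fun t : ℝ => MvPolynomial.eval (Pi.single i t) P
  have hGq : (fun t => G t - q t) =O[𝓝[>] 0] fun t => t ^ (p : ℝ) := by
    refine IsBigO.of_bound C ?_
    filter_upwards [hs.eventually hP, self_mem_nhdsWithin] with t ht (htpos : 0 < t)
    have hsub : (fun j => (x + Pi.single i t : Fin d → ℝ) j - x j) = Pi.single i t := by
      ext j; simp
    simpa [G, q, hsub, Pi.norm_single, abs_of_pos htpos,
      abs_of_pos (Real.rpow_pos_of_pos htpos _)] using ht
  have hq : (fun t => q t - q 0) =O[𝓝[>] 0] fun t => t :=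
    (P.isBigO_eval_single_sub i).mono nhdsWithin_le_nhds
  have hGq' : (fun t => G t - q t) =o[𝓝[>] 0] G := hGq.trans_isLittleO (hpow p hp hbp)
  have hq0 : q 0 = 0 := by
    have hqc : Continuous q :=
      (MvPolynomial.continuous_eval P).comp (continuous_single (A := fun _ : Fin d => ℝ) i)
    refine tendsto_nhds_unique ((hqc.tendsto 0).mono_left (nhdsWithin_le_nhds (s := Ioi 0))) ?_
    simpa using hf.sub (hGq'.trans_tendsto hf)
  have hGG : G =o[𝓝[>] 0] G := by
    simpa [hq0] using hGq'.add (hq.trans_isLittleO hlin)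
  have hG0 : G =ᶠ[𝓝[>] 0] 0 := by
    filter_upwards [not_frequently.1 fun h => isLittleO_irrefl h hGG] with t ht
    simpa using ht
  obtain ⟨t, ht0, htpos⟩ :=
    ((isLittleO_zero_right_iff.1 (hlin.congr' EventuallyEq.rfl hG0)).and
      self_mem_nhdsWithin).exists
  exact (ne_of_gt htpos) ht0

end

structure IsConvexHolderProfile (G : ℝ → ℝ) (b : ℝ) : Prop where
  continuousOn : ContinuousOn G (Icc 0 1)
  convexOn : ConvexOn ℝ (Icc 0 1) G
  tendsto_nhdsGT_zero : Tendsto G (𝓝[>] 0) (𝓝 0)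
  id_isLittleO : (fun t => t) =o[𝓝[>] 0] G
  rpow_isLittleO : ∀ p : ℝ, 0 < p → b < p → (fun t => t ^ p) =o[𝓝[>] 0] G
  isBigO_rpow : ∀ p : ℝ, 0 < p → p < b → G =O[𝓝[≥] 0] fun t => t ^ p

namespace IsConvexHolderProfile

variable {G : ℝ → ℝ} {b : ℝ} {d : ℕ}

theorem mHolderExpOn_comp_apply (hG : IsConvexHolderProfile G b) (i : Fin d)
    {x : Fin d → ℝ} (hx : x ∈ Icc (0 : Fin d → ℝ) 1) (hxi : x i = 0) :
    mHolderExpOn (fun y => G (y i)) (Icc 0 1) x = ENNReal.ofReal b := by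
  refine le_antisymm ?_ (ofReal_le_mHolderExpOn_of_isBigO fun p hp hpb => ?_)
  · have hseg (t : ℝ) : (x + Pi.single i t : Fin d → ℝ) i = t := by simp [hxi]
    refine mHolderExpOn_le_of_isLittleO (tendsto_add_single_nhdsWithin_Icc i hx hxi) ?_ ?_ ?_
      <;> simp only [hseg]
    exacts [hG.tendsto_nhdsGT_zero, hG.id_isLittleO, hG.rpow_isLittleO]
  · have hcoord : Tendsto (fun y : Fin d → ℝ => y i) (𝓝[Icc 0 1] x) (𝓝[≥] 0) := by
      refine tendsto_nhdsWithin_iff.2 ⟨?_, ?_⟩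
      · simpa [hxi] using ((continuous_apply i).tendsto x).mono_left nhdsWithin_le_nhds
      · filter_upwards [self_mem_nhdsWithin] with y hy using hy.1 i
    refine ((hG.isBigO_rpow p hp hpb).comp_tendsto hcoord).trans (IsBigO.of_bound 1 ?_)
    filter_upwards [self_mem_nhdsWithin] with y hy
    have hyi : y i ≤ ‖y - x‖ := by
      simpa [hxi, abs_of_nonneg (hy.1 i)] using norm_le_pi_norm (y - x) i
    simpa [abs_of_nonneg (Real.rpow_nonneg (hy.1 i) p),
      abs_of_nonneg (Real.rpow_nonneg (norm_nonneg (y - x)) p)]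
      using Real.rpow_le_rpow (hy.1 i) hyi hp.le

theorem exists_convex (hG : IsConvexHolderProfile G b) (i : Fin d) :
    ∃ f : (Fin d → ℝ) → ℝ,
      ContinuousOn f (Icc (0 : Fin d → ℝ) 1) ∧
      ConvexOn ℝ (Icc (0 : Fin d → ℝ) 1) f ∧
      ∀ x ∈ Icc (0 : Fin d → ℝ) 1, x i = 0 →
        mHolderExpOn f (Icc (0 : Fin d → ℝ) 1) x = ENNReal.ofReal b := by
  have hmaps : MapsTo (fun y : Fin d → ℝ => y i) (Icc 0 1) (Icc 0 1) :=
    fun y hy => ⟨hy.1 i, hy.2 i⟩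
  refine ⟨fun y => G (y i), hG.continuousOn.comp (continuous_apply i).continuousOn hmaps,
    ?_, fun x hx hxi => hG.mHolderExpOn_comp_apply i hx hxi⟩
  exact (hG.convexOn.comp_linearMap (LinearMap.proj (R := ℝ) (φ := fun _ : Fin d => ℝ) i)).subset
    (fun y hy => hmaps hy) (convex_Icc _ _)

end IsConvexHolderProfile

theorem tendsto_rpow_nhdsGT_zero {p : ℝ} (hp : 0 < p) :
    Tendsto (fun t : ℝ => t ^ p) (𝓝[>] 0) (𝓝 0) := by
  simpa [Real.zero_rpow hp.ne'] using
    (Real.continuousAt_rpow_const 0 p (Or.inr hp.le)).tendsto.mono_left nhdsWithin_le_nhds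

theorem isLittleO_rpow_rpow_nhdsGT_zero {p q : ℝ} (hpq : p < q) :
    (fun t : ℝ => t ^ q) =o[𝓝[>] 0] fun t => t ^ p := by
  refine (isLittleO_iff_tendsto' ?_).2 ((tendsto_rpow_nhdsGT_zero (sub_pos.2 hpq)).congr' ?_)
  all_goals filter_upwards [self_mem_nhdsWithin] with t (ht : 0 < t)
  · exact fun h => absurd h (Real.rpow_pos_of_pos ht p).ne'
  · rw [Real.rpow_sub ht]

theorem isConvexHolderProfile_neg_rpow {h : ℝ} (h0 : 0 < h) (h1 : h < 1) :
    IsConvexHolderProfile (fun t => -t ^ h) h where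
  continuousOn := (Real.continuous_rpow_const h0.le).neg.continuousOn
  convexOn := (Real.concaveOn_rpow h0.le h1.le).neg.subset Icc_subset_Ici_self (convex_Icc 0 1)
  tendsto_nhdsGT_zero := by simpa using (tendsto_rpow_nhdsGT_zero h0).neg
  id_isLittleO := by simpa using (isLittleO_rpow_rpow_nhdsGT_zero h1).neg_right
  rpow_isLittleO _ _ hp := (isLittleO_rpow_rpow_nhdsGT_zero hp).neg_right
  isBigO_rpow p hp hph := by
    refine IsBigO.of_bound 1 ?_
    filter_upwards [Icc_mem_nhdsGE one_pos] with t ⟨ht0, ht1⟩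
    simpa [abs_of_nonneg (Real.rpow_nonneg ht0 _)]
      using Real.rpow_le_rpow_of_exponent_ge' ht0 ht1 hp.le hph.le

theorem isConvexHolderProfile_mul_log :
    IsConvexHolderProfile (fun t => t * Real.log t) 1 := by
  have hlog : (fun _ => (1 : ℝ)) =o[𝓝[>] 0] Real.log :=
    (isLittleO_one_left_iff ℝ).2 (tendsto_abs_atBot_atTop.comp Real.tendsto_log_nhdsGT_zero)
  have hid : (fun t : ℝ => t) =o[𝓝[>] 0] fun t => t * Real.log t := by
    simpa using (isBigO_refl (fun t : ℝ => t) _).mul_isLittleO hlog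
  refine ⟨Real.continuous_mul_log.continuousOn,
    Real.convexOn_mul_log.subset Icc_subset_Ici_self (convex_Icc 0 1), ?_, hid,
    fun p _ hp => ?_, fun p hp hp1 => ?_⟩
  · simpa [mul_comm] using tendsto_log_mul_rpow_nhdsGT_zero one_pos
  · exact (isLittleO_rpow_rpow_nhdsGT_zero hp).trans (by simpa using hid)
  · refine IsBigO.of_bound (1 - p)⁻¹ ?_
    filter_upwards [Icc_mem_nhdsGE one_pos] with t ⟨ht0, ht1⟩
    rcases ht0.eq_or_lt with rfl | ht0
    · simp [Real.zero_rpow hp.ne']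
    have hsplit : t * Real.log t = Real.log t * t ^ (1 - p) * t ^ p := by
      rw [mul_assoc, ← Real.rpow_add ht0, sub_add_cancel, Real.rpow_one, mul_comm]
    rw [hsplit, norm_mul, Real.norm_of_nonneg (Real.rpow_nonneg ht0.le p), Real.norm_eq_abs,
      ← one_div]
    exact mul_le_mul_of_nonneg_right
      (Real.abs_log_mul_self_rpow_lt t _ ht0 ht1 (sub_pos.2 hp1)).le (Real.rpow_nonneg ht0.le p)

/-- `Real.log 0 = 0` makes this vanish at `0`; for `t > 0` it is `(log t - 2)⁻¹`, and the shift
by `2` keeps the logarithm `≤ -2` on `(0, 1]`, which makes it convex there. -/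
noncomputable def invLogProfile (t : ℝ) : ℝ := (Real.log (t / Real.exp 2))⁻¹

theorem log_div_exp_two {t : ℝ} (ht : 0 < t) : Real.log (t / Real.exp 2) = Real.log t - 2 := by
  rw [Real.log_div ht.ne' (Real.exp_pos 2).ne', Real.log_exp]

theorem log_div_exp_two_le {t : ℝ} (ht0 : 0 < t) (ht1 : t ≤ 1) :
    Real.log (t / Real.exp 2) ≤ -2 := by
  linarith [log_div_exp_two ht0, Real.log_nonpos ht0.le ht1]

theorem hasDerivAt_log_div_exp_two {t : ℝ} (ht : 0 < t) :
    HasDerivAt (fun s => Real.log (s / Real.exp 2)) t⁻¹ t := by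
  refine ((Real.hasDerivAt_log ht.ne').sub_const 2).congr_of_eventuallyEq ?_
  filter_upwards [lt_mem_nhds ht] with s hs using log_div_exp_two hs

theorem tendsto_invLogProfile : Tendsto invLogProfile (𝓝[>] 0) (𝓝 0) := by
  refine (tendsto_inv_atBot_zero.comp
    (tendsto_atBot_add_const_right _ (-2) Real.tendsto_log_nhdsGT_zero)).congr' ?_
  filter_upwards [self_mem_nhdsWithin] with t (ht : 0 < t)
  simp [invLogProfile, log_div_exp_two ht, sub_eq_add_neg]

theorem continuousOn_invLogProfile : ContinuousOn invLogProfile (Icc 0 1) := by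
  rintro t ⟨ht0, ht1⟩
  rcases ht0.eq_or_lt with rfl | htpos
  · refine ((continuousWithinAt_insert_self (s := Ioi 0)).2 ?_).mono
      fun s (hs : s ∈ Icc 0 1) => hs.1.eq_or_lt.imp Eq.symm id
    simpa [ContinuousWithinAt, invLogProfile] using tendsto_invLogProfile
  · have hL := log_div_exp_two_le htpos ht1
    exact ((hasDerivAt_log_div_exp_two htpos).continuousAt.inv₀ (by linarith)).continuousWithinAt

theorem convexOn_invLogProfile : ConvexOn ℝ (Icc 0 1) invLogProfile := by
  set L := fun s : ℝ => Real.log (s / Real.exp 2)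
  have hL' {s : ℝ} (hs : 0 < s) : HasDerivAt L s⁻¹ s := hasDerivAt_log_div_exp_two hs
  refine convexOn_of_hasDerivWithinAt2_nonneg (f' := fun s => -(s * L s ^ 2)⁻¹)
    (f'' := fun s => (L s ^ 2 + 2 * L s) / (s * L s ^ 2) ^ 2)
    (convex_Icc 0 1) continuousOn_invLogProfile ?_ ?_ ?_ <;>
    rintro t ht <;> rw [interior_Icc] at ht <;> obtain ⟨ht0, ht1⟩ := ht <;>
    have hL : L t ≤ -2 := log_div_exp_two_le ht0 ht1.le
  · refine (((hL' ht0).inv (by linarith)).congr_deriv ?_).hasDerivWithinAt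
    field_simp
  · have hc := ((hasDerivAt_id' t).mul ((hL' ht0).pow 2)).inv
      (mul_ne_zero ht0.ne' (pow_ne_zero 2 (by linarith)))
    refine (hc.neg.congr_deriv ?_).hasDerivWithinAt
    have : L t ≠ 0 := by linarith
    simp only [Pi.mul_apply, Pi.pow_apply]
    field_simp
    ring
  · exact div_nonneg (by nlinarith) (sq_nonneg _)

theorem isConvexHolderProfile_invLogProfile : IsConvexHolderProfile invLogProfile 0 := by
  have hpow : ∀ p : ℝ, 0 < p → (fun t => t ^ p) =o[𝓝[>] 0] invLogProfile := by
    intro p hp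
    refine (isLittleO_iff_tendsto' ?_).2 ?_
    · filter_upwards [Ioo_mem_nhdsGT one_pos] with t ⟨ht0, ht1⟩ hG
      have hL := log_div_exp_two_le ht0 ht1.le
      simp only [invLogProfile, inv_eq_zero] at hG
      linarith
    · have hlim : Tendsto (fun t => Real.log t * t ^ p - 2 * t ^ p) (𝓝[>] 0) (𝓝 0) := by
        simpa using (tendsto_log_mul_rpow_nhdsGT_zero hp).sub
          ((tendsto_rpow_nhdsGT_zero hp).const_mul 2)
      refine hlim.congr' ?_
      filter_upwards [self_mem_nhdsWithin] with t (ht : 0 < t)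
      simp only [invLogProfile, div_inv_eq_mul, log_div_exp_two ht]
      ring
  exact ⟨continuousOn_invLogProfile, convexOn_invLogProfile, tendsto_invLogProfile,
    by simpa using hpow 1 one_pos, fun p hp _ => hpow p hp,
    fun p hp hp0 => absurd hp0 hp.not_gt⟩

theorem exists_convex_with_given_exponent_on_face
    (d : ℕ) (hd : 0 < d) (h : ℝ) (h0 : 0 ≤ h) (h1 : h ≤ 1) :
    ∃ f : (Fin d → ℝ) → ℝ,
      ContinuousOn f (Set.Icc (0 : Fin d → ℝ) 1) ∧
      ConvexOn ℝ (Set.Icc (0 : Fin d → ℝ) 1) f ∧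
      ∀ x ∈ Set.Icc (0 : Fin d → ℝ) 1, x ⟨0, hd⟩ = 0 →
        mHolderExpOn f (Set.Icc (0 : Fin d → ℝ) 1) x = ENNReal.ofReal h := by
  obtain ⟨G, hG⟩ : ∃ G, IsConvexHolderProfile G h := by
    rcases h0.eq_or_lt with rfl | h0
    · exact ⟨_, isConvexHolderProfile_invLogProfile⟩
    rcases h1.lt_or_eq with h1 | rfl
    · exact ⟨_, isConvexHolderProfile_neg_rpow h0 h1⟩
    · exact ⟨_, isConvexHolderProfile_mul_log⟩
  exact hG.exists_convex ⟨0, hd⟩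
end
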